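/- arXiv:1907.13204 — 8 statements merged into one kernel-verified Lean document; each statement's English description precedes it below -/
import Mathlib

section
/- Let F be a relational structure with a metric-like stationary independence relation ⫫. Then ⫫ is 1-supported if and only if the following holds: whenever a ⫫_C b and C = C₁ ∪ C₂, then a ⫫_{C₁} b or a ⫫_{C₂} b. -/
open FirstOrder

namespace PaperSIR

/-- The group structure on the automorphism group of a first-order structure. -/
instance autGroup {L : FirstOrder.Language} {F : Type*} [L.Structure F] :
    Group (F ≃[L] F) where
  mul f g := f.comp g
  one := FirstOrder.Language.Equiv.refl L F
  inv := FirstOrder.Language.Equiv.symm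
  mul_assoc f g h := (FirstOrder.Language.Equiv.comp_assoc h g f).symm
  one_mul := FirstOrder.Language.Equiv.refl_comp
  mul_one := FirstOrder.Language.Equiv.comp_refl
  inv_mul_cancel := FirstOrder.Language.Equiv.symm_comp_self

variable {L : FirstOrder.Language} {F : Type*} [L.Structure F] [DecidableEq F]

/-- The tuples `a` and `a'` have the same type over the finite set `X`, i.e. some
automorphism of `F` fixing `X` pointwise maps `a` to `a'`. -/
def SameTypeOver (L : FirstOrder.Language) {F : Type*} [L.Structure F] (X : Finset F) {n : ℕ} (a a' : Fin n → F) : Prop :=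
  ∃ g : F ≃[L] F, (∀ x ∈ X, g x = x) ∧ ∀ i, g (a i) = a' i

/-- The finite set enumerated by a tuple. -/
def fset {n : ℕ} (a : Fin n → F) : Finset F :=
  Finset.image a Finset.univ

/-- A stationary independence relation (SIR) on `F`: a ternary relation on finite
subsets of `F` satisfying Invariance, Symmetry, Monotonicity, Existence, Transitivity
and Stationarity. -/
structure IsSIR (indep : Finset F → Finset F → Finset F → Prop) : Prop where
  invariance : ∀ (g : F ≃[L] F) (A C B : Finset F),
    indep A C B ↔ indep (A.image g) (C.image g) (B.image g)
  symmetry : ∀ A C B, indep A C B → indep B C A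
  monotonicity_left : ∀ A C B D, indep A C (B ∪ D) → indep A C B
  monotonicity_right : ∀ A C B D, indep A C (B ∪ D) → indep A (B ∪ C) D
  existence : ∀ {n : ℕ} (a : Fin n → F) (C B : Finset F),
    ∃ a' : Fin n → F, SameTypeOver L C a a' ∧ indep (fset a') C B
  transitivity : ∀ A C B B', indep A C B → indep A (B ∪ C) B' → indep A C B'
  stationarity : ∀ {n : ℕ} (a a' : Fin n → F) (C B : Finset F),
    SameTypeOver L C a a' → indep (fset a) C B → indep (fset a') C B →
    SameTypeOver L (B ∪ C) a a'

/-- The three extra conditions making a SIR metric-like. -/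
structure IsMetricLike (indep : Finset F → Finset F → Finset F → Prop) : Prop where
  not_self : ∀ (a : F) (A : Finset F), a ∉ A → ¬ indep {a} A {a}
  exists_dep : ∀ a : F, ∃ b : F, b ≠ a ∧ ¬ indep {a} ∅ {b}
  perfect_triviality : ∀ A C B C', indep A C B → C ⊆ C' → indep A C' B

/-- A SIR is 1-supported if whenever `a ⫫_C b` there is `C' ⊆ C` with `|C'| ≤ 1`
and `a ⫫_{C'} b`. -/
def OneSupported (indep : Finset F → Finset F → Finset F → Prop) : Prop :=
  ∀ (a b : F) (C : Finset F), indep {a} C {b} →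
    ∃ C' ⊆ C, C'.card ≤ 1 ∧ indep {a} C' {b}

/-- A sequence of pairwise distinct vertices is geodesic if `aᵢ ⫫_{aⱼ} aₖ`
whenever `i < j < k`. -/
def IsGeodesic (indep : Finset F → Finset F → Finset F → Prop)
    {n : ℕ} (a : Fin n → F) : Prop :=
  Function.Injective a ∧ ∀ i j k : Fin n, i < j → j < k → indep {a i} {a j} {a k}

/-- `k₀` is a bound for the SIR: every geodesic sequence `a₀, …, a_k` with `k ≥ k₀`
satisfies `a₀ ⫫_∅ a_k`. -/
def BoundedBy (indep : Finset F → Finset F → Finset F → Prop) (k₀ : ℕ) : Prop :=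
  ∀ k : ℕ, k₀ ≤ k → ∀ a : Fin (k + 1) → F, IsGeodesic indep a →
    indep {a 0} ∅ {a (Fin.last k)}

/-- A SIR is bounded if some `k₀` is a bound for it. -/
def Bounded (indep : Finset F → Finset F → Finset F → Prop) : Prop :=
  ∃ k₀ : ℕ, BoundedBy indep k₀

/-- `‖⫫‖`: the least bound of a bounded SIR. -/
noncomputable def sirNorm (indep : Finset F → Finset F → Finset F → Prop) : ℕ :=
  sInf {k₀ : ℕ | BoundedBy indep k₀}

/-- `F` is transitive: all elements have the same type, i.e. `Aut(F)` acts
transitively. -/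
def TransitiveStruct (L : FirstOrder.Language) (F : Type*) [L.Structure F] : Prop :=
  ∀ a b : F, ∃ g : F ≃[L] F, g a = b

/-- `b` is almost free from `a`: `¬ a ⫫_∅ b` and every `c ∉ {a, b}` with `a ⫫_b c`
satisfies `a ⫫_∅ c`. -/
def AlmostFreeFrom (indep : Finset F → Finset F → Finset F → Prop) (b a : F) : Prop :=
  ¬ indep {a} ∅ {b} ∧
    ∀ c : F, c ≠ a → c ≠ b → indep {a} {b} {c} → indep {a} ∅ {c}

/-- `g` moves the type `tp(x/X)` almost maximally: some realisation `x'` of it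
satisfies `x' ⫫_X g(x')`. -/
def MovesAlmostMaximally (indep : Finset F → Finset F → Finset F → Prop)
    (g : F ≃[L] F) (X : Finset F) (x : F) : Prop :=
  ∃ x' : F, SameTypeOver L X ![x] ![x'] ∧ indep {x'} X {g x'}

/-- `g` moves the type `tp(x/X)` by distance `k`: there is a realisation `x'` and a
geodesic sequence `x' = c₀, …, c_k = g(x')`. -/
def MovesByDistance (indep : Finset F → Finset F → Finset F → Prop)
    (g : F ≃[L] F) (X : Finset F) (x : F) (k : ℕ) : Prop :=
  ∃ x' : F, SameTypeOver L X ![x] ![x'] ∧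
    ∃ c : Fin (k + 1) → F, IsGeodesic indep c ∧ c 0 = x' ∧ c (Fin.last k) = g x'

end PaperSIR

open PaperSIR

theorem statement_2 {L : FirstOrder.Language} [L.IsRelational]
    {F : Type*} [L.Structure F] [DecidableEq F]
    (indep : Finset F → Finset F → Finset F → Prop)
    (hSIR : IsSIR (L := L) indep) (hML : IsMetricLike indep) :
    OneSupported indep ↔
      ∀ (a b : F) (C C₁ C₂ : Finset F), indep {a} C {b} → C = C₁ ∪ C₂ →
        indep {a} C₁ {b} ∨ indep {a} C₂ {b} := by
  constructor
  · intro h1 a b C C₁ C₂ hind hC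
    obtain ⟨C', hsub, hcard, hind'⟩ := h1 a b C hind
    rcases C'.eq_empty_or_nonempty with rfl | ⟨x, hxC'⟩
    · exact Or.inl (hML.perfect_triviality _ _ _ _ hind' (Finset.empty_subset _))
    · have hC' : C' = {x} := by
        apply Finset.eq_singleton_iff_unique_mem.mpr
        exact ⟨hxC', fun y hy => Finset.card_le_one.mp hcard y hy x hxC'⟩
      subst hC'
      have hxC : x ∈ C₁ ∪ C₂ := hC ▸ hsub (Finset.mem_singleton_self x)
      rcases Finset.mem_union.mp hxC with h | h
      · exact Or.inl (hML.perfect_triviality _ _ _ _ hind'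
          (Finset.singleton_subset_iff.mpr h))
      · exact Or.inr (hML.perfect_triviality _ _ _ _ hind'
          (Finset.singleton_subset_iff.mpr h))
  · intro h a b C
    induction C using Finset.strongInductionOn with
    | _ C ih =>
      intro hind
      by_cases hc : C.card ≤ 1
      · exact ⟨C, le_refl _, hc, hind⟩
      · obtain ⟨x, hx⟩ : C.Nonempty := Finset.card_pos.mp (by omega)
        have hC : C = {x} ∪ C.erase x := by
          rw [← Finset.insert_eq, Finset.insert_erase hx]
        rcases h a b C {x} (C.erase x) hind hC with h1 | h1
        · exact ⟨{x}, Finset.singleton_subset_iff.mpr hx, by simp, h1⟩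
        · obtain ⟨C', hsub, hcard, hind'⟩ := ih (C.erase x) (Finset.erase_ssubset hx) h1
          exact ⟨C', hsub.trans (Finset.erase_subset _ _), hcard, hind'⟩
end

section
/- Let F be a relational structure with a stationary independence relation ⫫ which satisfies Perfect triviality. Then ⫫ satisfies Metricity: if A ⫫_{C₁∪C₂} B and C₁ ⫫_D B, then A ⫫_{C₂∪D} B. -/
open FirstOrder

open PaperSIR

theorem statement_3 {L : FirstOrder.Language} [L.IsRelational]
    {F : Type*} [L.Structure F] [DecidableEq F]
    (indep : Finset F → Finset F → Finset F → Prop)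
    (hSIR : IsSIR (L := L) indep)
    (hPT : ∀ A C B C' : Finset F, indep A C B → C ⊆ C' → indep A C' B)
    (A B C₁ C₂ D : Finset F) (h1 : indep A (C₁ ∪ C₂) B) (h2 : indep C₁ D B) :
    indep A (C₂ ∪ D) B := by
  have hA : indep A (C₁ ∪ (C₂ ∪ D)) B := by
    apply hPT _ _ _ _ h1
    intro x hx
    simp only [Finset.mem_union] at hx ⊢
    tauto
  have hC : indep C₁ (C₂ ∪ D) B := hPT _ _ _ _ h2 Finset.subset_union_right
  exact hSIR.symmetry _ _ _
    (hSIR.transitivity B (C₂ ∪ D) C₁ A (hSIR.symmetry _ _ _ hC) (hSIR.symmetry _ _ _ hA))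
end

section
/- Let F be a transitive relational structure with a metric-like stationary independence relation ⫫, let a_1,…,a_n be a geodesic sequence of elements of F and let b ∈ F with b ≠ a_n. Then there is a_{n+1} ∈ F realising tp(b/a_n) such that a_1,…,a_n,a_{n+1} is a geodesic sequence. -/
open FirstOrder

open PaperSIR

theorem statement_6 {L : FirstOrder.Language} [L.IsRelational]
    {F : Type*} [L.Structure F] [DecidableEq F]
    (indep : Finset F → Finset F → Finset F → Prop)
    (htrans : TransitiveStruct L F)
    (hSIR : IsSIR (L := L) indep) (hML : IsMetricLike indep)
    (n : ℕ) (a : Fin (n + 1) → F) (hgeo : IsGeodesic indep a)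
    (b : F) (hb : b ≠ a (Fin.last n)) :
    ∃ c : F, SameTypeOver L {a (Fin.last n)} ![b] ![c] ∧
      IsGeodesic indep (Fin.snoc a c) := by
  classical
  obtain ⟨a', hst, hind⟩ := hSIR.existence (n := 1) ![b] {a (Fin.last n)} (fset a)
  set c := a' 0 with hc
  have hfa' : fset a' = {c} := by
    ext x
    simp [fset, Fin.exists_fin_one, hc, eq_comm]
  rw [hfa'] at hind
  have hst' : SameTypeOver L {a (Fin.last n)} ![b] ![c] := by
    obtain ⟨g, h1, h2⟩ := hst
    exact ⟨g, h1, fun i => by fin_cases i; simpa using h2 0⟩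
  obtain ⟨g, hgfix, hgmap⟩ := hst'
  have hcne : c ≠ a (Fin.last n) := by
    intro h
    apply hb
    have h1 : g b = c := by simpa using hgmap 0
    have h2 : g (a (Fin.last n)) = a (Fin.last n) := hgfix _ (by simp)
    exact g.injective (h1.trans (h.trans h2.symm))
  have hsub : ∀ s : Finset F, (∀ x ∈ s, ∃ i, a i = x) → s ∪ fset a = fset a := by
    intro s hs
    apply Finset.union_eq_right.mpr
    intro x hx
    obtain ⟨i, hi⟩ := hs x hx
    simp [fset, ← hi]
  have hci : ∀ i, indep {c} {a (Fin.last n)} {a i} := by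
    intro i
    apply hSIR.monotonicity_left {c} {a (Fin.last n)} {a i} (fset a)
    rw [hsub {a i} (by intro x hx; simp only [Finset.mem_singleton] at hx; exact ⟨i, hx.symm⟩)]
    exact hind
  have hcnei : ∀ i : Fin (n + 1), c ≠ a i := by
    intro i h
    apply hML.not_self c {a (Fin.last n)} (by simp [hcne])
    have := hci i
    rwa [← h] at this
  have key : ∀ i j : Fin (n + 1), i < j → indep {a i} {a j} {c} := by
    intro i j hij
    rcases eq_or_lt_of_le (Fin.le_last j) with hj | hj
    · rw [hj]
      exact hSIR.symmetry _ _ _ (hci i)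
    · have h1 : indep {a i} {a j} {a (Fin.last n)} := hgeo.2 i j (Fin.last n) hij hj
      have h2 : indep {c} {a (Fin.last n)} ({a j} ∪ {a i}) := by
        apply hSIR.monotonicity_left {c} {a (Fin.last n)} _ (fset a)
        rw [hsub _ (by
          intro x hx
          simp only [Finset.mem_union, Finset.mem_singleton] at hx
          rcases hx with h | h
          · exact ⟨j, h.symm⟩
          · exact ⟨i, h.symm⟩)]
        exact hind
      have h3 : indep {c} ({a j} ∪ {a (Fin.last n)}) {a i} :=
        hSIR.monotonicity_right _ _ _ _ h2
      have h4 : indep {a i} ({a (Fin.last n)} ∪ {a j}) {c} := by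
        rw [Finset.union_comm]
        exact hSIR.symmetry _ _ _ h3
      exact hSIR.transitivity {a i} {a j} {a (Fin.last n)} {c} h1 h4
  refine ⟨c, ⟨g, hgfix, hgmap⟩, ?_, ?_⟩
  · intro x y hxy
    induction x using Fin.lastCases with
    | last =>
      induction y using Fin.lastCases with
      | last => rfl
      | cast y =>
        simp only [Fin.snoc_last, Fin.snoc_castSucc] at hxy
        exact absurd hxy (hcnei y)
    | cast x =>
      induction y using Fin.lastCases with
      | last =>
        simp only [Fin.snoc_last, Fin.snoc_castSucc] at hxy
        exact absurd hxy.symm (hcnei x)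
      | cast y =>
        simp only [Fin.snoc_castSucc] at hxy
        exact congrArg Fin.castSucc (hgeo.1 hxy)
  · intro i j k hij hjk
    induction k using Fin.lastCases with
    | last =>
      have hj : j ≠ Fin.last (n + 1) := Fin.ne_last_of_lt hjk
      obtain ⟨j', rfl⟩ := Fin.exists_castSucc_eq.mpr hj
      have hi : i ≠ Fin.last (n + 1) := Fin.ne_last_of_lt (hij.trans hjk)
      obtain ⟨i', rfl⟩ := Fin.exists_castSucc_eq.mpr hi
      simp only [Fin.snoc_last, Fin.snoc_castSucc]
      exact key i' j' (by exact_mod_cast hij)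
    | cast k' =>
      have hj : j ≠ Fin.last (n + 1) := Fin.ne_last_of_lt (hjk.trans (Fin.castSucc_lt_last k'))
      obtain ⟨j', rfl⟩ := Fin.exists_castSucc_eq.mpr hj
      have hi : i ≠ Fin.last (n + 1) := Fin.ne_last_of_lt (hij.trans_le (Fin.le_last _))
      obtain ⟨i', rfl⟩ := Fin.exists_castSucc_eq.mpr hi
      simp only [Fin.snoc_castSucc]
      exact hgeo.2 i' j' k' (by exact_mod_cast hij) (by exact_mod_cast hjk)
end

section
/- Let F be a transitive relational structure with a bounded metric-like stationary independence relation ⫫, and let a, b, c ∈ F be pairwise distinct with a ⫫_∅ b. Then there is a geodesic sequence a_0, a_1, …, a_n in F with n = ‖⫫‖ such that a = a_0, b = a_n, and tp(a_i a_{i+1}) = tp(a c) for every 0 ≤ i ≤ n−1. -/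
open FirstOrder

open PaperSIR

section Helpers

variable {L : FirstOrder.Language} {F : Type*} [L.Structure F] [DecidableEq F]

lemma fset_one (f : Fin 1 → F) : fset f = {f 0} := by
  ext z
  simp only [fset, Finset.mem_image, Finset.mem_univ, true_and, Finset.mem_singleton]
  constructor
  · rintro ⟨i, rfl⟩; rw [Subsingleton.elim i 0]
  · rintro rfl; exact ⟨0, rfl⟩

lemma indep_mono {indep : Finset F → Finset F → Finset F → Prop}
    (hSIR : IsSIR (L := L) indep) {A C B S : Finset F} (h : indep A C B) (hS : S ⊆ B) :
    indep A C S := by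
  apply hSIR.monotonicity_left A C S B
  rwa [Finset.union_eq_right.mpr hS]

lemma chain_exists {indep : Finset F → Finset F → Finset F → Prop}
    (htrans : TransitiveStruct L F) (hSIR : IsSIR (L := L) indep)
    (hML : IsMetricLike indep) (a c : F) (hac : a ≠ c) (k : ℕ) :
    ∃ x : Fin (k + 1) → F, x 0 = a ∧ IsGeodesic indep x ∧
      ∀ i : Fin k, SameTypeOver L ∅ ![x i.castSucc, x i.succ] ![a, c] := by
  induction k with
  | zero =>
    refine ⟨fun _ => a, rfl, ⟨fun i j _ => Fin.ext (by omega), ?_⟩, fun i => i.elim0⟩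
    intro i j l hij hjl
    rw [Fin.lt_def] at hij hjl
    omega
  | succ k ih =>
    obtain ⟨x, hx0, ⟨hinj, hgeo⟩, htp⟩ := ih
    set p := x (Fin.last k) with hp
    obtain ⟨g, hg⟩ := htrans a p
    obtain ⟨yy, hsame, hindep⟩ := hSIR.existence ![g c] ({p} : Finset F) (fset x)
    set y' := yy 0 with hy'
    obtain ⟨g', hg'fix, hg'map⟩ := hsame
    have hg'p : g' p = p := hg'fix p (Finset.mem_singleton_self p)
    have hg'y : g' (g c) = y' := by simpa using hg'map 0
    have hind' : indep {y'} {p} (fset x) := by rwa [fset_one] at hindep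
    -- the type of (p, y') is tp(a c)
    have htppy : SameTypeOver L (∅ : Finset F) ![p, y'] ![a, c] := by
      refine ⟨(g'.comp g).symm, by simp, ?_⟩
      have h1 : (g'.comp g) a = p := by
        show g' (g a) = p
        rw [hg, hg'p]
      have h2 : (g'.comp g) c = y' := by
        show g' (g c) = y'
        exact hg'y
      intro i
      fin_cases i
      · show (g'.comp g).symm p = a
        rw [← h1]; exact (g'.comp g).symm_apply_apply a
      · show (g'.comp g).symm y' = c
        rw [← h2]; exact (g'.comp g).symm_apply_apply c
    have hy'p : y' ≠ p := by
      intro h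
      obtain ⟨e, -, he⟩ := htppy
      have e0 : e p = a := by simpa using he 0
      have e1 : e y' = c := by simpa using he 1
      rw [h] at e1
      exact hac (e0 ▸ e1 ▸ rfl)
    have hmemfset : ∀ i : Fin (k + 1), x i ∈ fset x := by
      intro i
      simp only [fset, Finset.mem_image, Finset.mem_univ, true_and]
      exact ⟨i, rfl⟩
    have hindsing : ∀ i : Fin (k + 1), indep {y'} {p} {x i} := by
      intro i
      exact indep_mono hSIR hind' (Finset.singleton_subset_iff.mpr (hmemfset i))
    have hne : ∀ i : Fin (k + 1), y' ≠ x i := by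
      intro i h
      by_cases hxi : x i = p
      · exact hy'p (h.trans hxi)
      · have h1 : indep {x i} {p} {x i} := h ▸ hindsing i
        exact hML.not_self (x i) {p} (by simpa using hxi) h1
    refine ⟨Fin.snoc x y', ?_, ⟨?_, ?_⟩, ?_⟩
    · rw [← Fin.castSucc_zero, Fin.snoc_castSucc]; exact hx0
    · -- injectivity
      intro i j hij
      rcases Fin.eq_castSucc_or_eq_last i with ⟨i', rfl⟩ | rfl <;>
        rcases Fin.eq_castSucc_or_eq_last j with ⟨j', rfl⟩ | rfl
      · rw [Fin.snoc_castSucc, Fin.snoc_castSucc] at hij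
        rw [hinj hij]
      · rw [Fin.snoc_castSucc, Fin.snoc_last] at hij
        exact absurd hij.symm (hne i')
      · rw [Fin.snoc_castSucc, Fin.snoc_last] at hij
        exact absurd hij (hne j')
      · rfl
    · -- geodesic triples
      intro i j l hij hjl
      rcases Fin.eq_castSucc_or_eq_last i with ⟨i', rfl⟩ | rfl
      · rcases Fin.eq_castSucc_or_eq_last j with ⟨j', rfl⟩ | rfl
        · rcases Fin.eq_castSucc_or_eq_last l with ⟨l', rfl⟩ | rfl
          · rw [Fin.snoc_castSucc, Fin.snoc_castSucc, Fin.snoc_castSucc]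
            exact hgeo i' j' l' (Fin.castSucc_lt_castSucc_iff.mp hij)
              (Fin.castSucc_lt_castSucc_iff.mp hjl)
          · rw [Fin.snoc_castSucc, Fin.snoc_castSucc, Fin.snoc_last]
            have hij' : i' < j' := Fin.castSucc_lt_castSucc_iff.mp hij
            by_cases hjlast : j' = Fin.last k
            · subst hjlast
              exact hSIR.symmetry _ _ _ (hindsing i')
            · have hj'lt : j' < Fin.last k := Fin.lt_last_iff_ne_last.mpr hjlast
              have h1 : indep {x i'} {x j'} {p} := hgeo i' j' (Fin.last k) hij' hj'lt
              have h2 : indep {y'} ({p} ∪ {x j'}) {x i'} :=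
                hML.perfect_triviality _ _ _ _ (hindsing i') Finset.subset_union_left
              have h3 : indep {x i'} ({p} ∪ {x j'}) {y'} := hSIR.symmetry _ _ _ h2
              exact hSIR.transitivity {x i'} {x j'} {p} {y'} h1 h3
        · exact absurd (hjl.trans_le (Fin.le_last l)) (by simp)
      · exact absurd ((hij.trans hjl).trans_le (Fin.le_last l)) (by simp)
    · -- consecutive types
      intro i
      rcases Fin.eq_castSucc_or_eq_last i with ⟨i₀, rfl⟩ | rfl
      · have e1 : (Fin.snoc x y' : Fin (k + 2) → F) (i₀.castSucc).castSucc = x i₀.castSucc := by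
          rw [Fin.snoc_castSucc]
        have e2 : (Fin.snoc x y' : Fin (k + 2) → F) (i₀.castSucc).succ = x i₀.succ := by
          rw [Fin.succ_castSucc, Fin.snoc_castSucc]
        rw [e1, e2]
        exact htp i₀
      · have e1 : (Fin.snoc x y' : Fin (k + 2) → F) (Fin.last k).castSucc = p := by
          rw [Fin.snoc_castSucc]
        have e2 : (Fin.snoc x y' : Fin (k + 2) → F) (Fin.last k).succ = y' := by
          rw [Fin.succ_last, Fin.snoc_last]
        rw [e1, e2]
        exact htppy

end Helpers

theorem statement_7 {L : FirstOrder.Language} [L.IsRelational]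
    {F : Type*} [L.Structure F] [DecidableEq F]
    (indep : Finset F → Finset F → Finset F → Prop)
    (htrans : TransitiveStruct L F)
    (hSIR : IsSIR (L := L) indep) (hML : IsMetricLike indep) (hbdd : Bounded indep)
    (a b c : F) (hab : a ≠ b) (hac : a ≠ c) (hbc : b ≠ c)
    (hind : indep {a} ∅ {b}) :
    ∃ x : Fin (sirNorm indep + 1) → F, IsGeodesic indep x ∧ x 0 = a ∧
      x (Fin.last (sirNorm indep)) = b ∧
      ∀ i : Fin (sirNorm indep),
        SameTypeOver L ∅ ![x i.castSucc, x i.succ] ![a, c] := by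
  set n := sirNorm indep with hn
  have hBB : BoundedBy indep n := by
    rw [hn, sirNorm]
    exact Nat.sInf_mem hbdd
  obtain ⟨x, hx0, hgeo, htp⟩ := chain_exists htrans hSIR hML a c hac n
  set b' := x (Fin.last n) with hb'
  have hab' : indep {a} ∅ {b'} := by
    have := hBB n le_rfl x hgeo
    rwa [hx0] at this
  -- b and b' have the same type over {a}
  have hsame : SameTypeOver L (∅ : Finset F) ![b'] ![b] := by
    obtain ⟨g, hg⟩ := htrans b' b
    exact ⟨g, by simp, fun i => by fin_cases i; simpa using hg⟩
  have hst : SameTypeOver L (({a} : Finset F) ∪ ∅) ![b'] ![b] := by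
    apply hSIR.stationarity ![b'] ![b] ∅ {a} hsame
    · rw [fset_one]
      exact hSIR.symmetry _ _ _ hab'
    · rw [fset_one]
      exact hSIR.symmetry _ _ _ hind
  obtain ⟨g, hgfix, hgmap⟩ := hst
  have hga : g a = a := hgfix a (by simp)
  have hgb' : g b' = b := by simpa using hgmap 0
  refine ⟨fun i => g (x i), ⟨?_, ?_⟩, ?_, ?_, ?_⟩
  · exact fun i j h => hgeo.1 (g.injective h)
  · intro i j l hij hjl
    have h1 := (hSIR.invariance g {x i} {x j} {x l}).mp (hgeo.2 i j l hij hjl)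
    simpa using h1
  · show g (x 0) = a
    rw [hx0]; exact hga
  · exact hgb'
  · intro i
    obtain ⟨e, -, he⟩ := htp i
    refine ⟨e.comp g.symm, by simp, ?_⟩
    have h0 : e (x i.castSucc) = a := by simpa using he 0
    have h1 : e (x i.succ) = c := by simpa using he 1
    intro j
    fin_cases j
    · show e (g.symm (g (x i.castSucc))) = a
      rw [g.symm_apply_apply, h0]
    · show e (g.symm (g (x i.succ))) = c
      rw [g.symm_apply_apply, h1]
end

section
/- Let F be a transitive relational structure with a metric-like stationary independence relation ⫫, and let v_1,…,v_k and w_1,…,w_k be geodesic sequences of elements of F such that tp(v_i v_{i+1}) = tp(w_i w_{i+1}) for every 1 ≤ i < k. Then tp(v_1 ⋯ v_k) = tp(w_1 ⋯ w_k). -/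
open FirstOrder

open PaperSIR

section AuxLemmas

variable {L : FirstOrder.Language} {F : Type*} [L.Structure F] [DecidableEq F]

lemma sameTypeOver_mono {X Y : Finset F} (hXY : Y ⊆ X) {n : ℕ} {a a' : Fin n → F}
    (h : SameTypeOver L X a a') : SameTypeOver L Y a a' := by
  obtain ⟨g, h1, h2⟩ := h
  exact ⟨g, fun x hx => h1 x (hXY hx), h2⟩

lemma fset_one_s8 (x : F) : fset (F := F) ![x] = {x} := by
  simp [fset]

lemma sir_aux (indep : Finset F → Finset F → Finset F → Prop)
    (htrans : TransitiveStruct L F)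
    (hSIR : IsSIR (L := L) indep) (hML : IsMetricLike indep) :
    ∀ (k : ℕ) (v w : Fin (k + 1) → F), IsGeodesic indep v → IsGeodesic indep w →
      (∀ i : Fin k,
        SameTypeOver L ∅ ![v i.castSucc, v i.succ] ![w i.castSucc, w i.succ]) →
      SameTypeOver L ∅ v w := by
  intro k
  induction k with
  | zero =>
    intro v w _ _ _
    obtain ⟨g, hg⟩ := htrans (v 0) (w 0)
    refine ⟨g, by simp, ?_⟩
    intro i
    have hi : i = 0 := Fin.fin_one_eq_zero i
    subst hi; exact hg
  | succ k ih =>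
    intro v w hv hw htp
    -- restrictions to the first k+1 coordinates
    have hv' : IsGeodesic indep (v ∘ Fin.castSucc) :=
      ⟨hv.1.comp (Fin.castSucc_injective _), fun i j l hij hjl =>
        hv.2 _ _ _ (Fin.castSucc_lt_castSucc_iff.mpr hij)
          (Fin.castSucc_lt_castSucc_iff.mpr hjl)⟩
    have hw' : IsGeodesic indep (w ∘ Fin.castSucc) :=
      ⟨hw.1.comp (Fin.castSucc_injective _), fun i j l hij hjl =>
        hw.2 _ _ _ (Fin.castSucc_lt_castSucc_iff.mpr hij)
          (Fin.castSucc_lt_castSucc_iff.mpr hjl)⟩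
    have htp' : ∀ i : Fin k,
        SameTypeOver L ∅ ![(v ∘ Fin.castSucc) i.castSucc, (v ∘ Fin.castSucc) i.succ]
          ![(w ∘ Fin.castSucc) i.castSucc, (w ∘ Fin.castSucc) i.succ] := by
      intro i
      have h := htp i.castSucc
      simpa [Function.comp] using h
    obtain ⟨g, -, hg⟩ := ih (v ∘ Fin.castSucc) (w ∘ Fin.castSucc) hv' hw' htp'
    have hg' : ∀ i : Fin (k + 2), (i : ℕ) ≤ k → g (v i) = w i := by
      intro i hi
      have hcast : i = Fin.castSucc ⟨(i : ℕ), by omega⟩ := by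
        apply Fin.ext; simp
      rw [hcast]
      exact hg ⟨(i : ℕ), by omega⟩
    set wl : F := w (Fin.last (k + 1)) with hwl
    set u : F := g (v (Fin.last (k + 1))) with hu
    have hinv : ∀ x y z : F, indep {x} {y} {z} → indep {g x} {g y} {g z} := by
      intro x y z h
      have h2 := (hSIR.invariance g {x} {y} {z}).mp h
      simpa using h2
    -- same type of u and wl over the second-to-last point
    have base : SameTypeOver L {w ((Fin.last k).castSucc)} ![u] ![wl] := by
      obtain ⟨h1, -, hh1⟩ := htp (Fin.last k)
      have e0 : h1 (v ((Fin.last k).castSucc)) = w ((Fin.last k).castSucc) := by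
        simpa using hh1 0
      have e1 : h1 (v ((Fin.last k).succ)) = w ((Fin.last k).succ) := by
        simpa using hh1 1
      refine ⟨h1.comp g.symm, ?_, ?_⟩
      · intro x hx
        rw [Finset.mem_singleton] at hx
        subst hx
        have hgp : g (v ((Fin.last k).castSucc)) = w ((Fin.last k).castSucc) :=
          hg' _ (by simp)
        show h1 (g.symm (w ((Fin.last k).castSucc))) = _
        have hsym : g.symm (w ((Fin.last k).castSucc)) = v ((Fin.last k).castSucc) := by
          rw [← hgp]; simp
        rw [hsym, e0]
      · intro i
        have hi : i = 0 := Fin.fin_one_eq_zero i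
        subst hi
        show h1 (g.symm (g (v (Fin.last (k + 1))))) = wl
        have hsym : g.symm (g (v (Fin.last (k + 1)))) = v (Fin.last (k + 1)) := by simp
        rw [hsym, hwl, ← Fin.succ_last]
        exact e1
    -- the growing base set
    set X : ℕ → Finset F := fun j => Finset.image w
      (Finset.univ.filter (fun i : Fin (k + 2) => k - j ≤ (i : ℕ) ∧ (i : ℕ) ≤ k)) with hX
    have key : ∀ j : ℕ, j ≤ k → SameTypeOver L (X j) ![u] ![wl] := by
      intro j
      induction j with
      | zero =>
        intro _
        refine sameTypeOver_mono ?_ base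
        intro x hx
        rw [hX] at hx
        simp only [Finset.mem_image, Finset.mem_filter, Finset.mem_univ, true_and] at hx
        obtain ⟨i, ⟨hi1, hi2⟩, rfl⟩ := hx
        have : i = (Fin.last k).castSucc := by
          apply Fin.ext; simp; omega
        rw [this]; simp
      | succ j ihj =>
        intro hj
        have hjk : j ≤ k := by omega
        have Pj := ihj hjk
        set i0 : Fin (k + 2) := ⟨k - (j + 1), by omega⟩ with hi0
        set i1 : Fin (k + 2) := ⟨k - j, by omega⟩ with hi1
        have hi01 : i0 < i1 := by
          rw [Fin.lt_def]; simp [hi0, hi1]; omega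
        have hi1l : i1 < Fin.last (k + 1) := by
          rw [Fin.lt_def]; simp [hi1]
        have hw1X : ({w i1} : Finset F) ⊆ X j := by
          intro x hx
          rw [Finset.mem_singleton] at hx
          subst hx
          rw [hX]
          simp only [Finset.mem_image, Finset.mem_filter, Finset.mem_univ, true_and]
          exact ⟨i1, ⟨by simp [hi1], by simp [hi1]⟩, rfl⟩
        -- independence of u from w i0 over X j
        have indu : indep {u} (X j) {w i0} := by
          have h1 := hv.2 i0 i1 (Fin.last (k + 1)) hi01 hi1l
          have h2 := hinv _ _ _ h1
          rw [hg' i0 (by simp [hi0]), hg' i1 (by simp [hi1])] at h2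
          have h3 : indep {w i0} (X j) {u} :=
            hML.perfect_triviality _ _ _ _ h2 hw1X
          exact hSIR.symmetry _ _ _ h3
        have indw : indep {wl} (X j) {w i0} := by
          have h1 := hw.2 i0 i1 (Fin.last (k + 1)) hi01 hi1l
          have h3 : indep {w i0} (X j) {wl} :=
            hML.perfect_triviality _ _ _ _ h1 hw1X
          exact hSIR.symmetry _ _ _ h3
        have stat := hSIR.stationarity ![u] ![wl] (X j) {w i0} Pj
          (by rw [fset_one_s8]; exact indu) (by rw [fset_one_s8]; exact indw)
        refine sameTypeOver_mono ?_ stat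
        intro x hx
        rw [hX] at hx
        simp only [Finset.mem_image, Finset.mem_filter, Finset.mem_univ, true_and] at hx
        obtain ⟨i, ⟨h1, h2⟩, rfl⟩ := hx
        rw [Finset.mem_union]
        by_cases hcase : (i : ℕ) = k - (j + 1)
        · left
          have : i = i0 := by apply Fin.ext; simp [hi0, hcase]
          rw [this]; simp
        · right
          rw [hX]
          simp only [Finset.mem_image, Finset.mem_filter, Finset.mem_univ, true_and]
          exact ⟨i, ⟨by omega, h2⟩, rfl⟩
    obtain ⟨hf, hfix, hfu⟩ := key k le_rfl
    have hfu' : hf u = wl := by simpa using hfu 0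
    refine ⟨hf.comp g, by simp, ?_⟩
    intro i
    show hf (g (v i)) = w i
    by_cases hcase : (i : ℕ) ≤ k
    · rw [hg' i hcase]
      apply hfix
      rw [hX]
      simp only [Finset.mem_image, Finset.mem_filter, Finset.mem_univ, true_and]
      exact ⟨i, ⟨by omega, hcase⟩, rfl⟩
    · have : i = Fin.last (k + 1) := by
        apply Fin.ext; simp; omega
      rw [this, ← hu, hfu', hwl]

end AuxLemmas


theorem statement_8 {L : FirstOrder.Language} [L.IsRelational]
    {F : Type*} [L.Structure F] [DecidableEq F]
    (indep : Finset F → Finset F → Finset F → Prop)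
    (htrans : TransitiveStruct L F)
    (hSIR : IsSIR (L := L) indep) (hML : IsMetricLike indep)
    (k : ℕ) (v w : Fin (k + 1) → F)
    (hv : IsGeodesic indep v) (hw : IsGeodesic indep w)
    (htp : ∀ i : Fin k,
      SameTypeOver L ∅ ![v i.castSucc, v i.succ] ![w i.castSucc, w i.succ]) :
    SameTypeOver L ∅ v w := by
  exact sir_aux indep htrans hSIR hML k v w hv hw htp
end

section
/- Let F be a transitive relational structure with a metric-like stationary independence relation ⫫ and let a, b, c ∈ F be such that: (1) a ⫫_b c, (2) there is a geodesic sequence a = v_1,…,v_k = b, and (3) there is a geodesic sequence b = w_1,…,w_ℓ = c. Then there is a geodesic sequence a = x_1,…,x_{k+ℓ−1} = c such that tp(x_1 ⋯ x_k) = tp(v_1 ⋯ v_k) and tp(x_k ⋯ x_{k+ℓ−1}) = tp(w_1 ⋯ w_ℓ). -/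
open FirstOrder

open PaperSIR

section Aux

variable {L : FirstOrder.Language} {F : Type*} [L.Structure F] [DecidableEq F]
variable {indep : Finset F → Finset F → Finset F → Prop}

lemma sir_shrink_right (h : IsSIR (L := L) indep) {A C S : Finset F}
    (hi : indep A C S) {e : F} (he : e ∈ S) : indep A C {e} :=
  h.monotonicity_left A C {e} S
    (by rwa [Finset.union_eq_right.mpr (Finset.singleton_subset_iff.mpr he)])

lemma sir_shrink_left (h : IsSIR (L := L) indep) {A C S : Finset F}
    (hi : indep A C S) {e : F} (he : e ∈ A) : indep {e} C S :=
  h.symmetry _ _ _ (sir_shrink_right h (h.symmetry _ _ _ hi) he)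

lemma sir_base_extend (h : IsSIR (L := L) indep) {A C S : Finset F}
    (hi : indep A C S) {e : F} (he : e ∈ S) : indep A ({e} ∪ C) S :=
  h.monotonicity_right A C {e} S
    (by rwa [Finset.union_eq_right.mpr (Finset.singleton_subset_iff.mpr he)])

lemma sir_map_singleton (h : IsSIR (L := L) indep) (g : F ≃[L] F) {x y z : F}
    (hi : indep {x} {y} {z}) : indep {g x} {g y} {g z} := by
  have := (h.invariance g {x} {y} {z}).mp hi
  simpa [Finset.image_singleton] using this

end Aux

theorem statement_9 {L : FirstOrder.Language} [L.IsRelational]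
    {F : Type*} [L.Structure F] [DecidableEq F]
    (indep : Finset F → Finset F → Finset F → Prop)
    (htrans : TransitiveStruct L F)
    (hSIR : IsSIR (L := L) indep) (hML : IsMetricLike indep)
    (a b c : F) (hind : indep {a} {b} {c})
    (k l : ℕ) (v : Fin (k + 1) → F) (w : Fin (l + 1) → F)
    (hv : IsGeodesic indep v) (hw : IsGeodesic indep w)
    (hv0 : v 0 = a) (hvl : v (Fin.last k) = b)
    (hw0 : w 0 = b) (hwl : w (Fin.last l) = c) :
    ∃ x : Fin (k + l + 1) → F, IsGeodesic indep x ∧ x 0 = a ∧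
      x (Fin.last (k + l)) = c ∧
      SameTypeOver L ∅ (fun i : Fin (k + 1) => x (Fin.castLE (by omega) i)) v ∧
      SameTypeOver L ∅ (fun i : Fin (l + 1) => x ⟨k + i.1, by omega⟩) w := by
  classical
  -- move w to w' ≡_{b} w with fset w' independent from fset v over {b}
  obtain ⟨w', ⟨g, hgfix, hgw⟩, hW⟩ := hSIR.existence w ({b} : Finset F) (fset v)
  have hgb : g b = b := hgfix b (Finset.mem_singleton_self b)
  have hw'0 : w' 0 = b := by rw [← hgw 0, hw0, hgb]
  set c' : F := w' (Fin.last l) with hc'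
  have hgc : g c = c' := by rw [← hwl, hgw]
  -- w' is geodesic
  have hw'inj : Function.Injective w' := by
    intro i j hij
    rw [← hgw i, ← hgw j] at hij
    exact hw.1 (g.toEquiv.injective hij)
  have hw'geo : IsGeodesic indep w' := by
    refine ⟨hw'inj, fun i j m hij hjm => ?_⟩
    have := sir_map_singleton hSIR g (hw.2 i j m hij hjm)
    simpa [hgw] using this
  have hmemv : ∀ i : Fin (k + 1), v i ∈ fset v := fun i =>
    Finset.mem_image.mpr ⟨i, Finset.mem_univ i, rfl⟩
  have hmemw' : ∀ i : Fin (l + 1), w' i ∈ fset w' := fun i =>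
    Finset.mem_image.mpr ⟨i, Finset.mem_univ i, rfl⟩
  -- basic independences from hW
  have hIndep1 : ∀ (i : Fin (l + 1)) (j : Fin (k + 1)), indep {w' i} {b} {v j} :=
    fun i j => sir_shrink_right hSIR (sir_shrink_left hSIR hW (hmemw' i)) (hmemv j)
  -- with a v-element added to the base
  have hIndep2 : ∀ (p : Fin (k + 1)) (i : Fin (l + 1)) (j : Fin (k + 1)),
      indep {w' i} ({b} ∪ {v p}) {v j} := by
    intro p i j
    have h1 : indep (fset w') ({v p} ∪ {b}) (fset v) :=
      sir_base_extend hSIR hW (hmemv p)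
    have h2 := sir_shrink_right hSIR (sir_shrink_left hSIR h1 (hmemw' i)) (hmemv j)
    rwa [Finset.union_comm] at h2
  -- with a w'-element added to the base
  have hIndep3 : ∀ (p : Fin (l + 1)) (i : Fin (l + 1)) (j : Fin (k + 1)),
      indep {w' i} ({b} ∪ {w' p}) {v j} := by
    intro p i j
    have h0 : indep (fset v) {b} (fset w') := hSIR.symmetry _ _ _ hW
    have h1 : indep (fset v) ({w' p} ∪ {b}) (fset w') :=
      sir_base_extend hSIR h0 (hmemw' p)
    have h2 := sir_shrink_right hSIR (sir_shrink_left hSIR h1 (hmemv j)) (hmemw' i)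
    have h3 := hSIR.symmetry _ _ _ h2
    rwa [Finset.union_comm] at h3
  -- stationarity: find h fixing a, b with h c = c'
  have hfset_c : fset (![c] : Fin 1 → F) = {c} := by
    ext x; simp [fset, Fin.exists_fin_one]
  have hfset_c' : fset (![c'] : Fin 1 → F) = {c'} := by
    ext x; simp [fset, Fin.exists_fin_one]
  have hstc : SameTypeOver L ({b} : Finset F) (![c] : Fin 1 → F) ![c'] := by
    refine ⟨g, hgfix, fun i => ?_⟩
    fin_cases i
    simpa using hgc
  have hca : indep {c'} {b} {a} := by
    have := hIndep1 (Fin.last l) 0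
    rwa [hv0] at this
  have hst := hSIR.stationarity (![c] : Fin 1 → F) ![c'] {b} {a} hstc
    (by rw [hfset_c]; exact hSIR.symmetry _ _ _ hind)
    (by rw [hfset_c']; exact hca)
  obtain ⟨h, hhfix, hhc⟩ := hst
  have hha : h a = a := hhfix a (by simp)
  have hhb : h b = b := hhfix b (by simp)
  have hhcc : h c = c' := by simpa using hhc 0
  -- the concatenated sequence
  set x' : Fin (k + l + 1) → F := fun t =>
    if ht : t.1 < k + 1 then v ⟨t.1, ht⟩ else w' ⟨t.1 - k, by omega⟩ with hx'
  have hx'v : ∀ (t : Fin (k + l + 1)) (ht : t.1 ≤ k), x' t = v ⟨t.1, by omega⟩ := by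
    intro t ht
    simp only [hx', dif_pos (by omega : t.1 < k + 1)]
  have hvk : v ⟨k, by omega⟩ = b := by rw [← hvl]; rfl
  have hx'w : ∀ (t : Fin (k + l + 1)) (ht : k ≤ t.1), x' t = w' ⟨t.1 - k, by omega⟩ := by
    intro t ht
    by_cases h1 : t.1 < k + 1
    · have htk : t.1 = k := by omega
      simp only [hx', dif_pos h1]
      have e1 : (⟨t.1, h1⟩ : Fin (k+1)) = ⟨k, by omega⟩ := by simp [htk]
      have e2 : (⟨t.1 - k, by omega⟩ : Fin (l+1)) = 0 := by
        apply Fin.ext; simp [htk]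
      rw [e1, hvk, e2, hw'0]
    · simp only [hx', dif_neg h1]
  -- injectivity of x'
  have hinj_lt : ∀ t1 t2 : Fin (k + l + 1), t1.1 < t2.1 → x' t1 ≠ x' t2 := by
    intro t1 t2 hlt heq
    by_cases h2 : t2.1 ≤ k
    · rw [hx'v t1 (by omega), hx'v t2 h2] at heq
      have := hv.1 heq
      rw [Fin.mk.injEq] at this
      omega
    · by_cases h1 : k ≤ t1.1
      · rw [hx'w t1 h1, hx'w t2 (by omega)] at heq
        have := hw'inj heq
        rw [Fin.mk.injEq] at this
        omega
      · rw [hx'v t1 (by omega), hx'w t2 (by omega)] at heq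
        set d := w' ⟨t2.1 - k, by omega⟩ with hd
        have hdb : d ≠ b := by
          rw [← hw'0]
          intro hdb
          have := hw'inj hdb
          rw [Fin.mk.injEq] at this
          simp at this
          omega
        have hid : indep {d} {b} {d} := by
          have := hIndep1 ⟨t2.1 - k, by omega⟩ ⟨t1.1, by omega⟩
          rwa [← hd, heq] at this
        exact hML.not_self d {b} (by simp [hdb]) hid
  have hx'geo : IsGeodesic indep x' := by
    constructor
    · intro t1 t2 heq
      by_contra hne
      rcases lt_trichotomy t1.1 t2.1 with hlt | heqi | hgt
      · exact hinj_lt t1 t2 hlt heq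
      · exact hne (Fin.ext heqi)
      · exact hinj_lt t2 t1 hgt heq.symm
    · intro i j m hij hjm
      have hij' : i.1 < j.1 := hij
      have hjm' : j.1 < m.1 := hjm
      by_cases hm : m.1 ≤ k
      · rw [hx'v i (by omega), hx'v j (by omega), hx'v m hm]
        exact hv.2 _ _ _ (Fin.mk_lt_mk.mpr hij') (Fin.mk_lt_mk.mpr hjm')
      · by_cases hi : k ≤ i.1
        · rw [hx'w i hi, hx'w j (by omega), hx'w m (by omega)]
          exact hw'geo.2 _ _ _ (Fin.mk_lt_mk.mpr (by omega)) (Fin.mk_lt_mk.mpr (by omega))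
        · rw [hx'v i (by omega)]
          by_cases hj : j.1 ≤ k
          · rw [hx'w m (by omega)]
            by_cases hjk : j.1 = k
            · rw [hx'v j hj]
              have e1 : v ⟨j.1, by omega⟩ = b := by
                have : (⟨j.1, by omega⟩ : Fin (k+1)) = ⟨k, by omega⟩ := by simp [hjk]
                rw [this, hvk]
              rw [e1]
              exact hSIR.symmetry _ _ _ (hIndep1 _ _)
            · rw [hx'v j hj]
              have h1 : indep {v ⟨i.1, by omega⟩} {v ⟨j.1, by omega⟩} {b} := by
                have := hv.2 ⟨i.1, by omega⟩ ⟨j.1, by omega⟩ (Fin.last k)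
                  (Fin.mk_lt_mk.mpr hij') (by rw [Fin.lt_def]; simpa using by omega)
                rwa [hvl] at this
              have h2 : indep {v ⟨i.1, by omega⟩} ({b} ∪ {v ⟨j.1, by omega⟩})
                  {w' ⟨m.1 - k, by omega⟩} :=
                hSIR.symmetry _ _ _ (hIndep2 _ _ _)
              exact hSIR.transitivity _ _ _ _ h1 h2
          · rw [hx'w j (by omega), hx'w m (by omega)]
            have h1 : indep {w' ⟨m.1 - k, by omega⟩} {w' ⟨j.1 - k, by omega⟩} {b} := by
              have := hw'geo.2 0 ⟨j.1 - k, by omega⟩ ⟨m.1 - k, by omega⟩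
                (by rw [Fin.lt_def]; simpa using by omega) (Fin.mk_lt_mk.mpr (by omega))
              rw [hw'0] at this
              exact hSIR.symmetry _ _ _ this
            have h2 : indep {w' ⟨m.1 - k, by omega⟩} ({b} ∪ {w' ⟨j.1 - k, by omega⟩})
                {v ⟨i.1, by omega⟩} := hIndep3 _ _ _
            exact hSIR.symmetry _ _ _ (hSIR.transitivity _ _ _ _ h1 h2)
  -- the final sequence
  refine ⟨fun t => h.symm (x' t), ⟨?_, ?_⟩, ?_, ?_, ?_, ?_⟩
  · intro t1 t2 heq
    exact hx'geo.1 (h.symm.toEquiv.injective heq)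
  · intro i j m hij hjm
    exact sir_map_singleton hSIR h.symm (hx'geo.2 i j m hij hjm)
  · show h.symm (x' 0) = a
    have e1 : x' 0 = a := by
      rw [hx'v 0 (by simp)]
      rw [← hv0]
      congr 1
      all_goals exact Fin.ext (by simp)
    rw [e1]
    nth_rewrite 1 [← hha]
    exact h.symm_apply_apply a
  · show h.symm (x' (Fin.last (k + l))) = c
    have e1 : x' (Fin.last (k + l)) = c' := by
      rw [hx'w (Fin.last (k + l)) (Nat.le_add_right k l)]
      rw [hc']
      congr 1
      all_goals exact Fin.ext (by show k + l - k = l; omega)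
    rw [e1, ← hhcc]
    exact h.symm_apply_apply c
  · refine ⟨h, by simp, fun i => ?_⟩
    show h (h.symm (x' (Fin.castLE (by omega) i))) = v i
    rw [h.apply_symm_apply]
    rw [hx'v _ (by exact Nat.lt_succ_iff.mp i.isLt)]
    congr 1
    all_goals exact Fin.ext rfl
  · refine ⟨g.symm.comp h, by simp, fun i => ?_⟩
    show g.symm (h (h.symm (x' ⟨k + i.1, by omega⟩))) = w i
    rw [h.apply_symm_apply]
    rw [hx'w _ (Nat.le_add_right k i.1)]
    have e2 : (⟨k + i.1 - k, by omega⟩ : Fin (l + 1)) = i := by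
      apply Fin.ext
      simp
    rw [e2, ← hgw i, g.symm_apply_apply]
end

section
/- Let F be a transitive relational structure with a bounded metric-like stationary independence relation ⫫. Then for every a ∈ F and every finite X ⊆ F with a ∉ X there is b ∈ F such that a is almost free from b, b is almost free from a, and b ⫫_a X. In particular, not b ⫫_∅ a and b ⫫_∅ X. -/
open FirstOrder

open PaperSIR

namespace AFH

open Finset

variable {L : FirstOrder.Language} {F : Type*} [L.Structure F] [DecidableEq F]
variable {indep : Finset F → Finset F → Finset F → Prop}

lemma fset_zero (a : Fin 0 → F) : fset a = ∅ := by
  simp [fset]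

lemma fset_one (a : Fin 1 → F) : fset a = {a 0} := by
  ext x
  simp [fset, Fin.exists_fin_one, eq_comm]

lemma exists_enum (A : Finset F) : ∃ a : Fin A.card → F, fset a = A := by
  refine ⟨fun i => (A.equivFin.symm i : F), ?_⟩
  ext x
  simp only [fset, Finset.mem_image, Finset.mem_univ, true_and]
  constructor
  · rintro ⟨i, rfl⟩
    exact (A.equivFin.symm i).2
  · intro hx
    exact ⟨A.equivFin ⟨x, hx⟩, by simp⟩

lemma image_fixed (g : F ≃[L] F) (C : Finset F) (h : ∀ x ∈ C, g x = x) :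
    C.image g = C := by
  ext y
  simp only [Finset.mem_image]
  constructor
  · rintro ⟨x, hx, rfl⟩
    rw [h x hx]; exact hx
  · intro hy
    exact ⟨y, hy, h y hy⟩

lemma indep_empty (hSIR : IsSIR (L := L) indep) (C B : Finset F) : indep ∅ C B := by
  obtain ⟨a', _, hind⟩ := hSIR.existence (n := 0) Fin.elim0 C B
  rwa [fset_zero] at hind

lemma indep_empty' (hSIR : IsSIR (L := L) indep) (A C : Finset F) : indep A C ∅ :=
  hSIR.symmetry _ _ _ (indep_empty hSIR C A)

lemma indep_base_self (hSIR : IsSIR (L := L) indep) (A C : Finset F) : indep A C C := by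
  obtain ⟨a, ha⟩ := exists_enum A
  obtain ⟨a', ⟨g, hgC, hga⟩, hind⟩ := hSIR.existence a C C
  have himg : (fset a).image g = fset a' := by
    rw [fset, fset, Finset.image_image]
    have : (⇑g ∘ a) = a' := funext hga
    rw [this]
  have h := (hSIR.invariance g (fset a) C C)
  rw [himg, image_fixed g C hgC] at h
  rw [← ha]
  exact h.mpr hind

lemma mono_r (hSIR : IsSIR (L := L) indep) {A C B B' : Finset F}
    (h : indep A C B) (hsub : B' ⊆ B) : indep A C B' := by
  have hb : B' ∪ B = B := Finset.union_eq_right.mpr hsub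
  exact hSIR.monotonicity_left A C B' B (by rwa [hb])

lemma mono_l (hSIR : IsSIR (L := L) indep) {A C B A' : Finset F}
    (h : indep A C B) (hsub : A' ⊆ A) : indep A' C B :=
  hSIR.symmetry _ _ _ (mono_r hSIR (hSIR.symmetry _ _ _ h) hsub)

lemma indep_union_base (hSIR : IsSIR (L := L) indep) {A C B : Finset F}
    (h : indep A C B) : indep A C (B ∪ C) :=
  hSIR.transitivity A C B (B ∪ C) h (indep_base_self hSIR A (B ∪ C))

lemma fact4 (hSIR : IsSIR (L := L) indep) {A C B D : Finset F}
    (h1 : indep A C B) (h2 : indep A (B ∪ C) D) : indep A C (B ∪ D) := by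
  have h3 : indep A (B ∪ C) (D ∪ (B ∪ C)) := indep_union_base hSIR h2
  have h4 : indep A (B ∪ C) (B ∪ D) := mono_r hSIR h3 (by
    intro x hx
    simp only [Finset.mem_union] at hx ⊢
    tauto)
  exact hSIR.transitivity A C B (B ∪ D) h1 h4

lemma single_exists (hSIR : IsSIR (L := L) indep) (c : F) (C B : Finset F) :
    ∃ (c' : F) (g : F ≃[L] F), (∀ x ∈ C, g x = x) ∧ g c = c' ∧ indep {c'} C B := by
  obtain ⟨a', ⟨g, hgC, hga⟩, hind⟩ := hSIR.existence ![c] C B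
  rw [fset_one] at hind
  exact ⟨a' 0, g, hgC, by simpa using hga 0, hind⟩

/-- The set of values after index `j`. -/
def Aft {n : ℕ} (b : Fin n → F) (j : Fin n) : Finset F :=
  (Finset.univ.filter (fun i => j < i)).image b

/-- The set of values before index `j`. -/
def Bef {n : ℕ} (b : Fin n → F) (j : Fin n) : Finset F :=
  (Finset.univ.filter (fun i => i < j)).image b

/-- The strong geodesic invariant. -/
def Inv (indep : Finset F → Finset F → Finset F → Prop) {n : ℕ} (b : Fin n → F) : Prop :=
  Function.Injective b ∧ ∀ j, indep (Aft b j) {b j} (Bef b j)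

lemma inv_geodesic (hSIR : IsSIR (L := L) indep) {n : ℕ} {b : Fin n → F}
    (h : Inv indep b) : IsGeodesic indep b := by
  refine ⟨h.1, fun i j k hij hjk => ?_⟩
  have h1 : indep (Aft b j) {b j} {b i} := mono_r hSIR (h.2 j) (by
    simp only [Finset.singleton_subset_iff, Bef, Finset.mem_image]
    exact ⟨i, by simp [hij], rfl⟩)
  have h2 : indep {b i} {b j} (Aft b j) := hSIR.symmetry _ _ _ h1
  exact mono_r hSIR h2 (by
    simp only [Finset.singleton_subset_iff, Aft, Finset.mem_image]
    exact ⟨k, by simp [hjk], rfl⟩)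

lemma decomp {n : ℕ} (b : Fin n → F) (i : Fin n) :
    (Aft b i ∪ {b i}) ∪ Bef b i = fset b := by
  ext x
  simp only [Aft, Bef, fset, Finset.mem_union, Finset.mem_singleton, Finset.mem_image,
    Finset.mem_filter, Finset.mem_univ, true_and]
  constructor
  · rintro ((⟨k, _, rfl⟩ | rfl) | ⟨k, _, rfl⟩) <;> exact ⟨_, rfl⟩
  · rintro ⟨k, rfl⟩
    rcases lt_trichotomy i k with h | h | h
    · exact Or.inl (Or.inl ⟨k, h, rfl⟩)
    · exact Or.inl (Or.inr (by rw [h]))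
    · exact Or.inr ⟨k, h, rfl⟩

lemma last_mem_aft {n : ℕ} (b : Fin (n + 1) → F) (i : Fin (n + 1)) :
    b (Fin.last n) ∈ Aft b i ∪ {b i} := by
  rcases eq_or_lt_of_le (Fin.le_last i) with h | h
  · exact Finset.mem_union_right _ (by simp [← h])
  · refine Finset.mem_union_left _ ?_
    simp only [Aft, Finset.mem_image, Finset.mem_filter, Finset.mem_univ, true_and]
    exact ⟨Fin.last n, h, rfl⟩

lemma bef_snoc {n : ℕ} (b : Fin (n + 1) → F) (c : F) (i : Fin (n + 1)) :
    Bef (Fin.snoc b c : Fin (n + 2) → F) i.castSucc = Bef b i := by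
  ext x
  simp only [Bef, Finset.mem_image, Finset.mem_filter, Finset.mem_univ, true_and]
  constructor
  · rintro ⟨k, hk, rfl⟩
    have hk' : (k : ℕ) < (i : ℕ) := by
      simpa [Fin.lt_def] using hk
    have hkn : (k : ℕ) < n + 1 := by have := i.isLt; omega
    refine ⟨⟨(k : ℕ), hkn⟩, by simpa [Fin.lt_def] using hk', ?_⟩
    have hek : k = Fin.castSucc ⟨(k : ℕ), hkn⟩ := by ext; rfl
    have hs := Fin.snoc_castSucc (α := fun _ => F) c b ⟨(k : ℕ), hkn⟩
    rw [← hek] at hs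
    exact hs.symm
  · rintro ⟨k, hk, rfl⟩
    exact ⟨k.castSucc, Fin.castSucc_lt_castSucc_iff.mpr hk, by rw [Fin.snoc_castSucc]⟩

lemma aft_snoc {n : ℕ} (b : Fin (n + 1) → F) (c : F) (i : Fin (n + 1)) :
    Aft (Fin.snoc b c : Fin (n + 2) → F) i.castSucc = Aft b i ∪ {c} := by
  ext x
  simp only [Aft, Finset.mem_union, Finset.mem_singleton, Finset.mem_image,
    Finset.mem_filter, Finset.mem_univ, true_and]
  constructor
  · rintro ⟨k, hk, rfl⟩
    by_cases hkl : k = Fin.last (n + 1)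
    · subst hkl
      exact Or.inr (Fin.snoc_last _ _)
    · have hkn : (k : ℕ) < n + 1 := by
        have := k.isLt
        have : (k : ℕ) ≠ n + 1 := fun h => hkl (by ext; simpa using h)
        omega
      refine Or.inl ⟨⟨(k : ℕ), hkn⟩, by simpa [Fin.lt_def] using hk, ?_⟩
      have hek : k = Fin.castSucc ⟨(k : ℕ), hkn⟩ := by ext; rfl
      have hs := Fin.snoc_castSucc (α := fun _ => F) c b ⟨(k : ℕ), hkn⟩
      rw [← hek] at hs
      exact hs.symm
  · rintro (⟨k, hk, rfl⟩ | rfl)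
    · exact ⟨k.castSucc, Fin.castSucc_lt_castSucc_iff.mpr hk, by rw [Fin.snoc_castSucc]⟩
    · refine ⟨Fin.last (n + 1), ?_, Fin.snoc_last _ _⟩
      simp only [Fin.lt_def, Fin.coe_castSucc, Fin.val_last]
      exact lt_of_le_of_lt (Nat.lt_succ_iff.mp i.isLt) (Nat.lt_succ_self _)

lemma aft_last {n : ℕ} (b : Fin (n + 1) → F) :
    Aft b (Fin.last n) = ∅ := by
  ext x
  simp only [Aft, Finset.mem_image, Finset.mem_filter, Finset.mem_univ, true_and,
    Finset.notMem_empty, iff_false, not_exists, not_and]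
  intro k hk
  exact absurd hk (Fin.not_lt.mpr (Fin.le_last k))

lemma aft_rev {n : ℕ} (b : Fin n → F) (j : Fin n) :
    Aft (b ∘ Fin.rev) j = Bef b j.rev := by
  ext x
  simp only [Aft, Bef, Finset.mem_image, Finset.mem_filter, Finset.mem_univ, true_and,
    Function.comp]
  constructor
  · rintro ⟨k, hk, rfl⟩
    exact ⟨k.rev, Fin.rev_lt_rev.mpr hk, rfl⟩
  · rintro ⟨k, hk, rfl⟩
    refine ⟨k.rev, ?_, by rw [Fin.rev_rev]⟩
    have := Fin.rev_lt_rev.mpr hk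
    rwa [Fin.rev_rev] at this

lemma bef_rev {n : ℕ} (b : Fin n → F) (j : Fin n) :
    Bef (b ∘ Fin.rev) j = Aft b j.rev := by
  ext x
  simp only [Aft, Bef, Finset.mem_image, Finset.mem_filter, Finset.mem_univ, true_and,
    Function.comp]
  constructor
  · rintro ⟨k, hk, rfl⟩
    exact ⟨k.rev, Fin.rev_lt_rev.mpr hk, rfl⟩
  · rintro ⟨k, hk, rfl⟩
    refine ⟨k.rev, ?_, by rw [Fin.rev_rev]⟩
    have := Fin.rev_lt_rev.mpr hk
    rwa [Fin.rev_rev] at this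

lemma inv_rev {n : ℕ} {b : Fin n → F} (hSIR : IsSIR (L := L) indep)
    (h : Inv indep b) : Inv indep (b ∘ Fin.rev) := by
  refine ⟨h.1.comp Fin.rev_injective, fun j => ?_⟩
  rw [aft_rev, bef_rev]
  exact hSIR.symmetry _ _ _ (h.2 j.rev)


lemma extend (hSIR : IsSIR (L := L) indep) (hML : IsMetricLike indep) {n : ℕ}
    (b : Fin (n + 1) → F) (hInv : Inv indep b)
    {c : F} (hc0 : c ≠ b 0) (hcl : c ≠ b (Fin.last n))
    (hgeo : indep {b 0} {b (Fin.last n)} {c}) (hdep : ¬ indep {b 0} ∅ {c}) :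
    ∃ b' : Fin (n + 2) → F, Inv indep b' ∧
      ¬ indep {b' 0} ∅ {b' (Fin.last (n + 1))} := by
  obtain ⟨c', g, hgfix, hgc, hind⟩ := single_exists hSIR c {b 0, b (Fin.last n)} (fset b)
  have hg0 : g (b 0) = b 0 := hgfix _ (by simp)
  have hgl : g (b (Fin.last n)) = b (Fin.last n) := hgfix _ (by simp)
  have hgeo' : indep {b 0} {b (Fin.last n)} {c'} := by
    have h := (hSIR.invariance g {b 0} {b (Fin.last n)} {c}).mp hgeo
    simpa [Finset.image_singleton, hg0, hgl, hgc] using h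
  have hdep' : ¬ indep {b 0} ∅ {c'} := by
    intro h
    apply hdep
    have hiff := hSIR.invariance g {b 0} ∅ {c}
    simp only [Finset.image_singleton, Finset.image_empty, hg0, hgc] at hiff
    exact hiff.mpr h
  have ginj : Function.Injective g := g.injective
  have hc'0 : c' ≠ b 0 := by
    intro h; apply hc0; apply ginj; rw [hgc, hg0, h]
  have hc'l : c' ≠ b (Fin.last n) := by
    intro h; apply hcl; apply ginj; rw [hgc, hgl, h]
  have hfresh : ∀ i, c' ≠ b i := by
    intro i h
    have h1 : indep {c'} {b 0, b (Fin.last n)} {c'} := by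
      refine mono_r hSIR hind ?_
      rw [h]
      simp only [Finset.singleton_subset_iff, fset, Finset.mem_image]
      exact ⟨i, Finset.mem_univ i, rfl⟩
    have h2 : c' ∉ ({b 0, b (Fin.last n)} : Finset F) := by
      simp [hc'0, hc'l]
    exact hML.not_self c' _ h2 h1
  have hsym : indep {c'} {b (Fin.last n)} {b 0} := hSIR.symmetry _ _ _ hgeo'
  have hind' : indep {c'} ({b 0} ∪ {b (Fin.last n)}) (fset b) := by
    rw [← Finset.insert_eq]
    exact hind
  have hstep : indep {c'} {b (Fin.last n)} (fset b) :=
    hSIR.transitivity _ _ _ _ hsym hind'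
  refine ⟨Fin.snoc b c', ⟨?_, ?_⟩, ?_⟩
  · intro k l hkl
    induction k using Fin.lastCases with
    | last =>
      induction l using Fin.lastCases with
      | last => rfl
      | cast l =>
        rw [Fin.snoc_last, Fin.snoc_castSucc] at hkl
        exact absurd hkl (hfresh l)
    | cast k =>
      induction l using Fin.lastCases with
      | last =>
        rw [Fin.snoc_last, Fin.snoc_castSucc] at hkl
        exact absurd hkl.symm (hfresh k)
      | cast l =>
        rw [Fin.snoc_castSucc, Fin.snoc_castSucc] at hkl
        rw [hInv.1 hkl]
  · intro j
    induction j using Fin.lastCases with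
    | last =>
      rw [aft_last]
      exact indep_empty hSIR _ _
    | cast i =>
      rw [aft_snoc, bef_snoc, Fin.snoc_castSucc]
      have h6 : indep {c'} {b (Fin.last n)} ((Aft b i ∪ {b i}) ∪ Bef b i) := by
        rwa [decomp]
      have h8 := hSIR.monotonicity_right {c'} {b (Fin.last n)} (Aft b i ∪ {b i}) (Bef b i) h6
      have habs : (Aft b i ∪ {b i}) ∪ {b (Fin.last n)} = Aft b i ∪ {b i} :=
        Finset.union_eq_left.mpr (Finset.singleton_subset_iff.mpr (last_mem_aft b i))
      rw [habs] at h8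
      have h9 : indep (Bef b i) {b i} (Aft b i ∪ {c'}) :=
        fact4 hSIR (hSIR.symmetry _ _ _ (hInv.2 i)) (hSIR.symmetry _ _ _ h8)
      exact hSIR.symmetry _ _ _ h9
  · have h0 : (Fin.snoc b c' : Fin (n + 2) → F) 0 = b 0 := by
      rw [← Fin.castSucc_zero, Fin.snoc_castSucc]
    rw [h0, Fin.snoc_last]
    exact hdep'

/-- A mutually almost free pair. -/
def GoodPair (indep : Finset F → Finset F → Finset F → Prop) (p q : F) : Prop :=
  p ≠ q ∧ ¬ indep {p} ∅ {q} ∧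
    (∀ c : F, c ≠ p → c ≠ q → indep {p} {q} {c} → indep {p} ∅ {c}) ∧
    (∀ c : F, c ≠ q → c ≠ p → indep {q} {p} {c} → indep {q} ∅ {c})

lemma goodPair_map (hSIR : IsSIR (L := L) indep) {p q : F} (h : GoodPair indep p q)
    (g : F ≃[L] F) : GoodPair indep (g p) (g q) := by
  obtain ⟨hne, hdep, hA, hB⟩ := h
  have ginj : Function.Injective g := g.injective
  have inv2 : ∀ x y : F, indep {x} ∅ {y} ↔ indep {g x} ∅ {g y} := by
    intro x y
    have h := hSIR.invariance g {x} ∅ {y}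
    simpa using h
  have inv3 : ∀ x y z : F, indep {x} {y} {z} ↔ indep {g x} {g y} {g z} := by
    intro x y z
    have h := hSIR.invariance g {x} {y} {z}
    simpa using h
  refine ⟨fun h => hne (ginj h), fun h => hdep ((inv2 p q).mpr h), ?_, ?_⟩
  · intro c hc1 hc2 hcind
    obtain ⟨c0, rfl⟩ := g.surjective c
    exact (inv2 p c0).mp (hA c0 (fun h => hc1 (congrArg g h))
      (fun h => hc2 (congrArg g h)) ((inv3 p q c0).mpr hcind))
  · intro c hc1 hc2 hcind
    obtain ⟨c0, rfl⟩ := g.surjective c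
    exact (inv2 q c0).mp (hB c0 (fun h => hc1 (congrArg g h))
      (fun h => hc2 (congrArg g h)) ((inv3 q p c0).mpr hcind))


lemma bef_zero {n : ℕ} (b : Fin (n + 1) → F) : Bef b 0 = ∅ := by
  ext x
  simp only [Bef, Finset.mem_image, Finset.mem_filter, Finset.mem_univ, true_and,
    Finset.notMem_empty, iff_false, not_exists, not_and]
  intro k hk
  exact absurd hk (Fin.not_lt.mpr (Fin.zero_le k))

lemma inv_pair (hSIR : IsSIR (L := L) indep) {p q : F} (hne : q ≠ p) :
    Inv indep ![p, q] := by
  constructor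
  · intro k l h
    fin_cases k <;> fin_cases l <;>
      first
        | rfl
        | exact absurd h (Ne.symm hne)
        | exact absurd h hne
  · intro j
    have h2 : j = 0 ∨ j = 1 := by
      fin_cases j
      · exact Or.inl rfl
      · exact Or.inr rfl
    rcases h2 with rfl | rfl
    · have hA : Aft (![p, q] : Fin 2 → F) 0 = {q} := by
        ext x
        simp only [Aft, Finset.mem_image, Finset.mem_filter, Finset.mem_univ, true_and,
          Finset.mem_singleton]
        constructor
        · rintro ⟨k, hk, rfl⟩
          have hkv : (0 : ℕ) < (k : ℕ) := hk
          have h1 := k.isLt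
          have hk1 : k = 1 := Fin.ext (by simp only [Fin.val_one]; omega)
          rw [hk1]
          rfl
        · rintro rfl
          exact ⟨1, by decide, rfl⟩
      rw [hA, bef_zero]
      exact indep_empty' hSIR _ _
    · have he : (1 : Fin 2) = Fin.last 1 := rfl
      rw [he, aft_last]
      exact indep_empty hSIR _ _

end AFH

theorem statement_11 {L : FirstOrder.Language} [L.IsRelational]
    {F : Type*} [L.Structure F] [DecidableEq F]
    (indep : Finset F → Finset F → Finset F → Prop)
    (htrans : TransitiveStruct L F)
    (hSIR : IsSIR (L := L) indep) (hML : IsMetricLike indep) (hbdd : Bounded indep)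
    (a : F) (X : Finset F) (ha : a ∉ X) :
    ∃ b : F, AlmostFreeFrom indep a b ∧ AlmostFreeFrom indep b a ∧
      indep {b} {a} X ∧ ¬ indep {b} ∅ {a} ∧ indep {b} ∅ X := by
  classical
  obtain ⟨k₀, hk₀⟩ := hbdd
  obtain ⟨b1, hb1ne, hb1dep⟩ := hML.exists_dep a
  have hP1 : ∃ b : Fin 2 → F, AFH.Inv indep b ∧ ¬ indep {b 0} ∅ {b (Fin.last 1)} :=
    ⟨![a, b1], AFH.inv_pair hSIR hb1ne, hb1dep⟩
  have hPbound : ∀ m : ℕ,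
      (∃ b : Fin (m + 1) → F, AFH.Inv indep b ∧ ¬ indep {b 0} ∅ {b (Fin.last m)}) →
        m ≤ k₀ := by
    intro m hm
    obtain ⟨b, hInv, hdep⟩ := hm
    by_contra hge
    exact hdep (hk₀ m (by omega) b (AFH.inv_geodesic hSIR hInv))
  have hmax : ∃ m : ℕ, 1 ≤ m ∧
      (∃ b : Fin (m + 1) → F, AFH.Inv indep b ∧ ¬ indep {b 0} ∅ {b (Fin.last m)}) ∧
      ¬ (∃ b : Fin (m + 1 + 1) → F, AFH.Inv indep b ∧
          ¬ indep {b 0} ∅ {b (Fin.last (m + 1))}) := by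
    by_contra hcon
    push_neg at hcon
    have hall : ∀ j : ℕ, ∃ b : Fin (j + 1 + 1) → F, AFH.Inv indep b ∧
        ¬ indep {b 0} ∅ {b (Fin.last (j + 1))} := by
      intro j
      induction j with
      | zero => exact hP1
      | succ j ih => exact hcon (j + 1) (by omega) ih
    exact absurd (hPbound (k₀ + 1) (hall k₀)) (by omega)
  obtain ⟨m, hm1, ⟨b, hbInv, hbdep⟩, hnot⟩ := hmax
  have hpq : b 0 ≠ b (Fin.last m) := by
    intro h
    have h2 := congrArg Fin.val (hbInv.1 h)
    simp only [Fin.val_zero, Fin.val_last] at h2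
    omega
  have hA : ∀ c : F, c ≠ b 0 → c ≠ b (Fin.last m) → indep {b 0} {b (Fin.last m)} {c} →
      indep {b 0} ∅ {c} := by
    intro c hcp hcq hcind
    by_contra hcdep
    exact hnot (AFH.extend hSIR hML b hbInv hcp hcq hcind hcdep)
  have hrev0 : (b ∘ Fin.rev) 0 = b (Fin.last m) := by
    simp [Function.comp, Fin.rev_zero]
  have hrevl : (b ∘ Fin.rev) (Fin.last m) = b 0 := by
    simp [Function.comp, Fin.rev_last]
  have hB : ∀ c : F, c ≠ b (Fin.last m) → c ≠ b 0 → indep {b (Fin.last m)} {b 0} {c} →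
      indep {b (Fin.last m)} ∅ {c} := by
    intro c hcq hcp hcind
    by_contra hcdep
    apply hnot
    exact AFH.extend hSIR hML (b ∘ Fin.rev) (AFH.inv_rev hSIR hbInv)
      (by rwa [hrev0]) (by rwa [hrevl]) (by rwa [hrev0, hrevl]) (by rwa [hrev0])
  have hGP : AFH.GoodPair indep (b 0) (b (Fin.last m)) := ⟨hpq, hbdep, hA, hB⟩
  obtain ⟨g1, hg1⟩ := htrans (b 0) a
  have hGP1 : AFH.GoodPair indep a (g1 (b (Fin.last m))) := by
    have h := AFH.goodPair_map hSIR hGP g1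
    rwa [hg1] at h
  obtain ⟨bb, g2, hg2fix, hg2, hind2⟩ := AFH.single_exists hSIR (g1 (b (Fin.last m))) {a} X
  have hg2a : g2 a = a := hg2fix a (by simp)
  have hGP2 : AFH.GoodPair indep a bb := by
    have h := AFH.goodPair_map hSIR hGP1 g2
    rwa [hg2a, hg2] at h
  obtain ⟨hne, hdepab, hA', hB'⟩ := hGP2
  have hnba : ¬ indep {bb} ∅ {a} := fun h => hdepab (hSIR.symmetry _ _ _ h)
  have hbbX : bb ∉ X := by
    intro hbX
    have h1 : indep {bb} {a} {bb} :=
      AFH.mono_r hSIR hind2 (Finset.singleton_subset_iff.mpr hbX)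
    have hba : bb ∉ ({a} : Finset F) := by
      simp only [Finset.mem_singleton]
      exact fun h => hne h.symm
    exact hML.not_self bb {a} hba h1
  have hsingle : ∀ x ∈ X, indep {bb} ∅ {x} := by
    intro x hx
    have h1 : indep {bb} {a} {x} :=
      AFH.mono_r hSIR hind2 (Finset.singleton_subset_iff.mpr hx)
    exact hB' x (fun h => hbbX (h ▸ hx)) (fun h => ha (h ▸ hx)) h1
  have hXfree : ∀ Y : Finset F, Y ⊆ X → indep {bb} ∅ Y := by
    intro Y
    induction Y using Finset.induction_on with
    | empty => exact fun _ => AFH.indep_empty' hSIR _ _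
    | @insert x Y hxY ih =>
      intro hsub
      have hY : indep {bb} ∅ Y := ih (fun z hz => hsub (Finset.mem_insert_of_mem hz))
      have hx : indep {bb} ∅ {x} := hsingle x (hsub (Finset.mem_insert_self x Y))
      have hx' : indep {bb} (Y ∪ ∅) {x} := by
        rw [Finset.union_empty]
        exact hML.perfect_triviality {bb} ∅ {x} Y hx (Finset.empty_subset Y)
      have h := AFH.fact4 hSIR hY hx'
      rwa [Finset.union_comm, ← Finset.insert_eq] at h
  exact ⟨bb, ⟨hnba, hB'⟩, ⟨hdepab, hA'⟩, hind2, hnba, hXfree X (Finset.Subset.refl X)⟩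
end

section
/- Let F be a transitive countable relational structure with a bounded 1-supported metric-like stationary independence relation ⫫, and let g ∈ Aut(F) be such that for every finite X ⊂ F and every free type p over X there is a realisation a ⊨ p with g(a) ≠ a. Then for every finite X ⊂ F and every type q = tp(x/X) with x ∉ X, there is a realisation c ⊨ q with g(c) ≠ c. -/
open FirstOrder

namespace PaperSIR

section AuxiliaryLemmas

variable {L : FirstOrder.Language} {F : Type*} [L.Structure F] [DecidableEq F]
variable {indep : Finset F → Finset F → Finset F → Prop}

lemma aux_image_fix (θ : F ≃[L] F) (C : Finset F) (h : ∀ y ∈ C, θ y = y) :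
    C.image θ = C := by
  ext y
  simp only [Finset.mem_image]
  constructor
  · rintro ⟨z, hz, rfl⟩
    rw [h z hz]; exact hz
  · intro hy; exact ⟨y, hy, h y hy⟩

lemma aux_fset_one (a : Fin 1 → F) : fset a = {a 0} := by
  ext y
  simp only [fset, Finset.mem_image, Finset.mem_univ, true_and, Finset.mem_singleton]
  constructor
  · rintro ⟨i, hi⟩
    rw [← hi]
    congr 1
    exact Subsingleton.elim i 0
  · intro h; exact ⟨0, h.symm⟩

lemma aux_refl1 (hS : IsSIR (L := L) indep) (p : F) (C : Finset F) : indep {p} C C := by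
  obtain ⟨a', ⟨θ, hfix, hmap⟩, hind⟩ := hS.existence ![p] C C
  have h0 : θ p = a' 0 := by simpa using hmap 0
  rw [aux_fset_one] at hind
  have hiff := hS.invariance θ {p} C C
  rw [Finset.image_singleton, aux_image_fix θ C hfix] at hiff
  exact hiff.2 (h0 ▸ hind)

lemma aux_mono_r (hS : IsSIR (L := L) indep) {A C B B' : Finset F}
    (h : indep A C B) (hsub : B' ⊆ B) : indep A C B' := by
  have he : B' ∪ B = B := Finset.union_eq_right.mpr hsub
  exact hS.monotonicity_left A C B' B (by rwa [he])

lemma aux_t2 (hS : IsSIR (L := L) indep) {p : F} {C B : Finset F}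
    (h : indep {p} C B) : indep {p} C (B ∪ C) :=
  hS.transitivity _ _ _ _ h (aux_refl1 hS p (B ∪ C))

lemma aux_t4 (hS : IsSIR (L := L) indep) {p : F} {C B D : Finset F}
    (h1 : indep {p} C B) (h2 : indep {p} (B ∪ C) D) : indep {p} C (B ∪ D) := by
  have h3 : indep {p} (B ∪ C) (D ∪ (B ∪ C)) := aux_t2 hS h2
  have h4 : indep {p} C (D ∪ (B ∪ C)) := hS.transitivity _ _ _ _ h1 h3
  refine aux_mono_r hS h4 ?_
  intro y hy
  simp only [Finset.mem_union] at hy ⊢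
  tauto

lemma aux_inv_pair (hS : IsSIR (L := L) indep) (θ : F ≃[L] F) (p q r : F) :
    indep {p} {q} {r} ↔ indep {θ p} {θ q} {θ r} := by
  have := hS.invariance θ {p} {q} {r}
  simpa [Finset.image_singleton] using this

lemma aux_inv_empty (hS : IsSIR (L := L) indep) (θ : F ≃[L] F) (p r : F) :
    indep {p} ∅ {r} ↔ indep {θ p} ∅ {θ r} := by
  have := hS.invariance θ {p} ∅ {r}
  simpa [Finset.image_singleton] using this

lemma aux_dep_symm (hS : IsSIR (L := L) indep) {a b : F}
    (h : ¬ indep {a} ∅ {b}) : ¬ indep {b} ∅ {a} :=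
  fun h' => h (hS.symmetry _ _ _ h')

/-- Maximality of the dependent pair `(a, b)` at its right end `b`:
any further dependent extension over `b` is independent from `a`. -/
def MaxRP (indep : Finset F → Finset F → Finset F → Prop) (a b : F) : Prop :=
  ∀ c, c ≠ b → indep {c} {b} {a} → ¬ indep {b} ∅ {c} → indep {a} ∅ {c}

lemma aux_maxr_map (hS : IsSIR (L := L) indep) (θ : F ≃[L] F) {a b : F}
    (h : MaxRP indep a b) : MaxRP indep (θ a) (θ b) := by
  intro c hc h1 h2
  have hc0 : θ.symm c ≠ b := by
    intro he
    apply hc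
    rw [← he, θ.apply_symm_apply]
  have h1' : indep {θ.symm c} {b} {a} := by
    have := (aux_inv_pair hS θ.symm c (θ b) (θ a)).1 h1
    rwa [θ.symm_apply_apply, θ.symm_apply_apply] at this
  have h2' : ¬ indep {b} ∅ {θ.symm c} := by
    intro hx
    apply h2
    have := (aux_inv_empty hS θ b (θ.symm c)).1 hx
    rwa [θ.apply_symm_apply] at this
  have h3 := h _ hc0 h1' h2'
  have := (aux_inv_empty hS θ a (θ.symm c)).1 h3
  rwa [θ.apply_symm_apply] at this

lemma aux_afdir (hS : IsSIR (L := L) indep) {a b : F} (hM : MaxRP indep a b) :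
    ∀ z, z ≠ b → indep {a} {b} {z} → indep {a} ∅ {z} := by
  intro z hzb h
  by_cases hbz : indep {b} ∅ {z}
  · have h1 : indep {z} ∅ {b} := hS.symmetry _ _ _ hbz
    have h2 : indep {z} {b} {a} := hS.symmetry _ _ _ h
    have h2' : indep {z} (({b} : Finset F) ∪ ∅) {a} := by rwa [Finset.union_empty]
    have h3 : indep {z} ∅ ({b} ∪ {a}) := aux_t4 hS h1 h2'
    exact hS.symmetry _ _ _ (aux_mono_r hS h3 (by simp))
  · exact hM z hzb (hS.symmetry _ _ _ h) hbz

lemma aux_afset (hS : IsSIR (L := L) indep) (hML : IsMetricLike indep)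
    (h1sup : OneSupported indep) {a b : F} (hM : MaxRP indep a b)
    (C : Finset F) : b ∉ C → indep {a} {b} C → indep {a} ∅ C := by
  classical
  induction C using Finset.induction_on with
  | empty => intro _ _; exact aux_refl1 hS a ∅
  | @insert z C hzC ih =>
    intro hbC hind
    have hbC' : b ∉ C := fun h => hbC (Finset.mem_insert_of_mem h)
    have hzb : z ≠ b := fun h => hbC (h ▸ Finset.mem_insert_self z C)
    have hC : indep {a} {b} C := aux_mono_r hS hind (Finset.subset_insert z C)
    have h0C : indep {a} ∅ C := ih hbC' hC
    have h1 : indep {a} {b} (C ∪ {z}) := by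
      refine aux_mono_r hS hind ?_
      intro y hy
      simp only [Finset.mem_union, Finset.mem_singleton, Finset.mem_insert] at hy ⊢
      tauto
    have h2 : indep {a} (C ∪ {b}) {z} := hS.monotonicity_right {a} {b} C {z} h1
    obtain ⟨S, hSsub, hScard, hSind⟩ := h1sup a z (C ∪ {b}) h2
    have hCz : indep {a} C {z} := by
      by_cases hSe : S = ∅
      · exact hML.perfect_triviality _ _ _ _ (hSe ▸ hSind) (Finset.empty_subset C)
      · obtain ⟨s, hs⟩ := Finset.card_eq_one.mp
          (le_antisymm hScard (Nat.one_le_iff_ne_zero.mpr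
            (fun h => hSe (Finset.card_eq_zero.mp h))))
        subst hs
        have hsmem : s ∈ C ∪ {b} := Finset.singleton_subset_iff.mp hSsub
        rcases Finset.mem_union.mp hsmem with hsC | hsb
        · exact hML.perfect_triviality _ _ _ _ hSind (Finset.singleton_subset_iff.mpr hsC)
        · rw [Finset.mem_singleton] at hsb
          subst hsb
          have := aux_afdir hS hM z hzb hSind
          exact hML.perfect_triviality _ _ _ _ this (Finset.empty_subset C)
    have hCz' : indep {a} (C ∪ ∅) {z} := by rwa [Finset.union_empty]
    have := aux_t4 hS h0C hCz'
    have he : insert z C = C ∪ {z} := by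
      ext y
      simp only [Finset.mem_insert, Finset.mem_union, Finset.mem_singleton]
      tauto
    rwa [he]

/-- initial segment of a chain. -/
def Tset (a : ℕ → F) (j : ℕ) : Finset F := (Finset.range (j + 1)).image a

/-- strong chain invariant. -/
def StrC (indep : Finset F → Finset F → Finset F → Prop) (a : ℕ → F) (n : ℕ) : Prop :=
  (∀ i j, i < j → j ≤ n → a i ≠ a j) ∧
    ∀ j, j < n → indep {a (j + 1)} {a j} (Tset a j)

lemma aux_mem_Tset (a : ℕ → F) {i j : ℕ} (h : i ≤ j) : a i ∈ Tset a j :=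
  Finset.mem_image_of_mem a (Finset.mem_range.mpr (by omega))

lemma aux_Tset_mono (a : ℕ → F) {j k : ℕ} (h : j ≤ k) : Tset a j ⊆ Tset a k :=
  Finset.image_subset_image (Finset.range_subset_range.mpr (by omega))

lemma aux_rfact (hS : IsSIR (L := L) indep) (hML : IsMetricLike indep)
    {a : ℕ → F} {n : ℕ} (h : StrC indep a n) :
    ∀ j k, j < k → k ≤ n → indep {a k} {a j} (Tset a j) := by
  have key : ∀ d j, j + d + 1 ≤ n → indep {a (j + d + 1)} {a j} (Tset a j) := by
    intro d
    induction d with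
    | zero => intro j hj; simpa using h.2 j (by omega)
    | succ d ih =>
      intro j hj
      have hR : indep {a (j + 1 + d + 1)} {a (j + 1)} (Tset a (j + 1)) := ih (j + 1) (by omega)
      have he : j + 1 + d + 1 = j + (d + 1) + 1 := by omega
      rw [he] at hR
      have h1 : indep {a (j + 1)} {a j} (Tset a j) := h.2 j (by omega)
      have h1s : indep (Tset a j) {a j} {a (j + 1)} := hS.symmetry _ _ _ h1
      have h2 : indep {a (j + (d + 1) + 1)} {a (j + 1)} (Tset a j) :=
        aux_mono_r hS hR (aux_Tset_mono a (by omega))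
      have h3 : indep {a (j + (d + 1) + 1)} (({a (j + 1)} : Finset F) ∪ {a j}) (Tset a j) :=
        hML.perfect_triviality _ _ _ _ h2 Finset.subset_union_left
      have h3s : indep (Tset a j) (({a (j + 1)} : Finset F) ∪ {a j}) {a (j + (d + 1) + 1)} :=
        hS.symmetry _ _ _ h3
      have h4 : indep (Tset a j) {a j} {a (j + (d + 1) + 1)} :=
        hS.transitivity _ _ _ _ h1s h3s
      exact hS.symmetry _ _ _ h4
  intro j k hjk hk
  have he : k = j + (k - j - 1) + 1 := by omega
  rw [he]
  exact key _ _ (by omega)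

lemma aux_vfact (hS : IsSIR (L := L) indep) (hML : IsMetricLike indep)
    {a : ℕ → F} {n : ℕ} (h : StrC indep a n) :
    ∀ d i j, i < j → j + d ≤ n → indep {a i} {a j} ((Finset.Icc j (j + d)).image a) := by
  intro d
  induction d with
  | zero =>
    intro i j hij hjn
    have : (Finset.Icc j (j + 0)).image a = {a j} := by
      simp [Finset.Icc_self]
    rw [this]
    exact aux_refl1 hS (a i) {a j}
  | succ d ih =>
    intro i j hij hjn
    have IH : indep {a i} {a j} ((Finset.Icc j (j + d)).image a) := ih i j hij (by omega)
    set W : Finset F := (Finset.Icc j (j + d)).image a with hW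
    have hstep0 : indep {a (j + d + 1)} {a (j + d)} (Tset a (j + d)) :=
      h.2 (j + d) (by omega)
    have hstep1 : indep {a (j + d + 1)} {a (j + d)} {a i} :=
      aux_mono_r hS hstep0 (by
        intro y hy
        rw [Finset.mem_singleton] at hy
        rw [hy]
        exact aux_mem_Tset a (by omega))
    have hjdW : a (j + d) ∈ W := Finset.mem_image_of_mem a (Finset.mem_Icc.mpr (by omega))
    have hstep2 : indep {a (j + d + 1)} W {a i} :=
      hML.perfect_triviality _ _ _ _ hstep1 (Finset.singleton_subset_iff.mpr hjdW)
    have hstep3 : indep {a i} W {a (j + d + 1)} := hS.symmetry _ _ _ hstep2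
    have hjW : a j ∈ W := Finset.mem_image_of_mem a (Finset.mem_Icc.mpr (by omega))
    have hWu : W ∪ {a j} = W := Finset.union_eq_left.mpr (Finset.singleton_subset_iff.mpr hjW)
    have hstep3' : indep {a i} (W ∪ {a j}) {a (j + d + 1)} := by rwa [hWu]
    have h4 : indep {a i} {a j} (W ∪ {a (j + d + 1)}) := aux_t4 hS IH hstep3'
    have hfin : (Finset.Icc j (j + (d + 1))).image a = W ∪ {a (j + d + 1)} := by
      ext y
      simp only [hW, Finset.mem_image, Finset.mem_union, Finset.mem_Icc, Finset.mem_singleton]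
      constructor
      · rintro ⟨t, ⟨ht1, ht2⟩, rfl⟩
        by_cases htd : t ≤ j + d
        · exact Or.inl ⟨t, ⟨ht1, htd⟩, rfl⟩
        · right; congr 1; omega
      · rintro (⟨t, ⟨ht1, ht2⟩, rfl⟩ | rfl)
        · exact ⟨t, ⟨ht1, by omega⟩, rfl⟩
        · exact ⟨j + d + 1, ⟨by omega, by omega⟩, rfl⟩
    rw [hfin]
    exact h4

lemma aux_snoc_str (hS : IsSIR (L := L) indep) (hML : IsMetricLike indep)
    {a : ℕ → F} {n : ℕ} {z : F} (h : StrC indep a n)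
    (hz : indep {z} {a n} (Tset a n)) (hzn : z ≠ a n) :
    StrC indep (fun i => if i ≤ n then a i else z) (n + 1) := by
  have hz' : ∀ i, i ≤ n → z ≠ a i := by
    intro i hi he
    rcases eq_or_lt_of_le hi with h' | h'
    · exact hzn (h' ▸ he)
    · have hmem : indep {z} {a n} {z} := by
        refine aux_mono_r hS hz ?_
        intro y hy
        rw [Finset.mem_singleton] at hy
        rw [hy, he]
        exact aux_mem_Tset a (by omega)
      exact hML.not_self z {a n} (by simpa using hzn) hmem
  constructor
  · intro i j hij hjn
    by_cases hjn' : j ≤ n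
    · simp only [if_pos (le_trans (le_of_lt hij) hjn'), if_pos hjn']
      exact h.1 i j hij hjn'
    · have hj : j = n + 1 := by omega
      have hi : i ≤ n := by omega
      simp only [if_pos hi, hj, if_neg (by omega : ¬ n + 1 ≤ n)]
      exact fun he => hz' i hi he.symm
  · intro j hj
    have hTeq : ∀ m, m ≤ n → Tset (fun i => if i ≤ n then a i else z) m = Tset a m := by
      intro m hm
      apply Finset.image_congr
      intro y hy
      simp only [Finset.coe_range, Set.mem_Iio] at hy
      simp only [if_pos (by omega : y ≤ n)]
    by_cases hjn : j < n
    · simp only [if_pos (by omega : j + 1 ≤ n), if_pos (by omega : j ≤ n), hTeq j (by omega)]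
      exact h.2 j hjn
    · have hj' : j = n := by omega
      subst hj'
      simp only [if_neg (by omega : ¬ j + 1 ≤ j), if_pos (le_refl j), hTeq j le_rfl]
      exact hz

lemma aux_rev_str (hS : IsSIR (L := L) indep) (hML : IsMetricLike indep)
    {a : ℕ → F} {n : ℕ} (h : StrC indep a n) :
    StrC indep (fun i => a (n - i)) n := by
  constructor
  · intro i j hij hjn he
    exact h.1 (n - j) (n - i) (by omega) (by omega) he.symm
  · intro j hj
    have hT : Tset (fun i => a (n - i)) j = (Finset.Icc (n - j) n).image a := by
      ext y
      simp only [Tset, Finset.mem_image, Finset.mem_range, Finset.mem_Icc]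
      constructor
      · rintro ⟨i, hi, rfl⟩
        exact ⟨n - i, ⟨by omega, by omega⟩, rfl⟩
      · rintro ⟨d, ⟨hd1, hd2⟩, rfl⟩
        refine ⟨n - d, by omega, ?_⟩
        congr 1
        omega
    rw [hT]
    have hv := aux_vfact hS hML h j (n - (j + 1)) (n - j) (by omega) (by omega)
    have he : n - j + j = n := by omega
    rw [he] at hv
    simpa using hv

lemma aux_str_geod (hS : IsSIR (L := L) indep) (hML : IsMetricLike indep)
    {a : ℕ → F} {n : ℕ} (h : StrC indep a n) :
    IsGeodesic indep (fun i : Fin (n + 1) => a i.val) := by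
  constructor
  · intro i j hij
    by_contra hne
    rcases lt_trichotomy i.val j.val with h' | h' | h'
    · exact h.1 i.val j.val h' (Nat.lt_succ_iff.mp j.isLt) hij
    · exact hne (Fin.ext h')
    · exact h.1 j.val i.val h' (Nat.lt_succ_iff.mp i.isLt) hij.symm
  · intro i j k hij hjk
    have hr := aux_rfact hS hML h j.val k.val hjk (Nat.lt_succ_iff.mp k.isLt)
    have h1 : indep {a k.val} {a j.val} {a i.val} :=
      aux_mono_r hS hr (Finset.singleton_subset_iff.mpr (aux_mem_Tset a (le_of_lt hij)))
    exact hS.symmetry _ _ _ h1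

lemma aux_exists_mutual (hS : IsSIR (L := L) indep) (hML : IsMetricLike indep)
    (hbdd : Bounded indep) (x0 : F) :
    ∃ a b : F, a ≠ b ∧ ¬ indep {a} ∅ {b} ∧ MaxRP indep a b ∧ MaxRP indep b a := by
  by_contra H
  push_neg at H
  obtain ⟨k₀, hk⟩ := hbdd
  have ext : ∀ (m : ℕ) (b : ℕ → F), StrC indep b m → ¬ indep {b 0} ∅ {b m} →
      ¬ MaxRP indep (b 0) (b m) →
      ∃ a' : ℕ → F, StrC indep a' (m + 1) ∧ ¬ indep {a' 0} ∅ {a' (m + 1)} := by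
    intro m b hstr hdep hnM
    unfold MaxRP at hnM
    push_neg at hnM
    obtain ⟨c, hc1, hc2, hc3, hc4⟩ := hnM
    obtain ⟨a', ⟨θ, hfix, hmap⟩, hind⟩ :=
      hS.existence ![c] (({b 0} : Finset F) ∪ {b m}) (Tset b m)
    set z := a' 0 with hzdef
    have h0 : θ c = z := by simpa using hmap 0
    have hθα : θ (b 0) = b 0 := hfix _ (by simp)
    have hθβ : θ (b m) = b m := hfix _ (by simp)
    have hz1 : z ≠ b m := by
      intro he
      apply hc1
      apply θ.injective
      rw [h0, hθβ, he]
    have hz2 : indep {z} {b m} {b 0} := by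
      have := (aux_inv_pair hS θ c (b m) (b 0)).1 hc2
      rwa [h0, hθα, hθβ] at this
    have hz3 : ¬ indep {b 0} ∅ {z} := by
      intro hx
      apply hc4
      have h1 : θ.symm (b 0) = b 0 := by
        apply θ.injective
        rw [θ.apply_symm_apply, hθα]
      have h2 : θ.symm z = c := by rw [← h0, θ.symm_apply_apply]
      have := (aux_inv_empty hS θ.symm (b 0) z).1 hx
      rwa [h1, h2] at this
    rw [aux_fset_one a'] at hind
    have hz5 : indep {z} {b m} (Tset b m) :=
      hS.transitivity {z} {b m} {b 0} (Tset b m) hz2 hind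
    refine ⟨fun i => if i ≤ m then b i else z, aux_snoc_str hS hML hstr hz5 hz1, ?_⟩
    simp only [if_pos (Nat.zero_le m), if_neg (by omega : ¬ m + 1 ≤ m)]
    exact hz3
  have claim : ∀ m, 1 ≤ m → ∃ a : ℕ → F, StrC indep a m ∧ ¬ indep {a 0} ∅ {a m} := by
    intro m hm
    induction m, hm using Nat.le_induction with
    | base =>
      obtain ⟨b, hb1, hb2⟩ := hML.exists_dep x0
      refine ⟨fun i => if i = 0 then x0 else b, ?_, ?_⟩
      · constructor
        · intro i j hij hjn
          have hi : i = 0 := by omega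
          have hj : j = 1 := by omega
          simp only [hi, hj, if_pos rfl, if_neg (by omega : (1 : ℕ) ≠ 0)]
          exact fun he => hb1 he.symm
        · intro j hj
          have hj0 : j = 0 := by omega
          subst hj0
          have hT : Tset (fun i => if i = 0 then x0 else b) 0 = {x0} := by
            ext y
            simp [Tset, Finset.mem_image, Finset.range_one]
          simp only [hT, if_pos rfl, if_neg (by omega : (1 : ℕ) ≠ 0)]
          exact aux_refl1 hS b {x0}
      · simp only [if_pos rfl, if_neg (by omega : (1 : ℕ) ≠ 0)]
        exact hb2
    | succ m hm ih =>
      obtain ⟨a, hstr, hdep⟩ := ih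
      have hne : a 0 ≠ a m := hstr.1 0 m (by omega) le_rfl
      by_cases hM : MaxRP indep (a 0) (a m)
      · have hnM : ¬ MaxRP indep (a m) (a 0) := by
          intro hM2
          exact H (a 0) (a m) hne hdep hM hM2
        have hrev := aux_rev_str hS hML hstr
        have h0 : (fun i => a (m - i)) 0 = a m := by simp
        have hm' : (fun i => a (m - i)) m = a 0 := by simp
        have hdep' : ¬ indep {(fun i => a (m - i)) 0} ∅ {(fun i => a (m - i)) m} := by
          rw [h0, hm']
          exact aux_dep_symm hS hdep
        have hnM' : ¬ MaxRP indep ((fun i => a (m - i)) 0) ((fun i => a (m - i)) m) := by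
          rw [h0, hm']
          exact hnM
        exact ext m _ hrev hdep' hnM'
      · exact ext m a hstr hdep hM
  obtain ⟨a, hstr, hdep⟩ := claim (k₀ + 1) (by omega)
  have hgeod := aux_str_geod hS hML hstr
  have hb := hk (k₀ + 1) (by omega) _ hgeod
  simp only [Fin.val_zero, Fin.val_last] at hb
  exact hdep hb

lemma aux_sto_single (e : F ≃[L] F) (X : Finset F) (hfix : ∀ y ∈ X, e y = y)
    {p q : F} (h : e p = q) : SameTypeOver L X ![p] ![q] := by
  refine ⟨e, hfix, ?_⟩
  intro i
  have : i = 0 := Subsingleton.elim i 0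
  subst this
  simpa using h

end AuxiliaryLemmas

end PaperSIR
open PaperSIR

theorem statement_14 {L : FirstOrder.Language} [L.IsRelational]
    {F : Type*} [L.Structure F] [Countable F] [DecidableEq F]
    (indep : Finset F → Finset F → Finset F → Prop)
    (htrans : TransitiveStruct L F)
    (hSIR : IsSIR (L := L) indep) (hML : IsMetricLike indep)
    (hbdd : Bounded indep) (h1sup : OneSupported indep)
    (g : F ≃[L] F)
    (hfree : ∀ (X : Finset F) (a : F), indep {a} ∅ X →
      ∃ a' : F, SameTypeOver L X ![a] ![a'] ∧ g a' ≠ a') :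
    ∀ (X : Finset F) (x : F), x ∉ X →
      ∃ c : F, SameTypeOver L X ![x] ![c] ∧ g c ≠ c := by
  classical
  intro X x hxX
  by_cases hgx : g x = x
  case neg =>
    exact ⟨x, aux_sto_single (FirstOrder.Language.Equiv.refl L F) X
      (fun y _ => by simp) (by simp), hgx⟩
  by_cases hfree0 : indep {x} ∅ X
  case pos => exact hfree X x hfree0
  -- main case: the type of x over X is not free
  obtain ⟨a0, b0, hab_ne, hab_dep, hM1, hM2⟩ := aux_exists_mutual hSIR hML hbdd x
  obtain ⟨σ, hσ⟩ := htrans a0 x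
  -- transport the pair so that its left end is x
  have hxb_ne : x ≠ σ b0 := by
    rw [← hσ]
    intro he
    exact hab_ne (σ.injective he)
  have hdep1 : ¬ indep {x} ∅ {σ b0} := by
    rw [← hσ]
    intro hx'
    apply hab_dep
    have h1 : σ.symm (σ a0) = a0 := σ.symm_apply_apply a0
    have h2 : σ.symm (σ b0) = b0 := σ.symm_apply_apply b0
    have := (aux_inv_empty hSIR σ.symm (σ a0) (σ b0)).1 hx'
    rwa [h1, h2] at this
  have hM1' : MaxRP indep x (σ b0) := by
    have := aux_maxr_map hSIR σ hM1
    rwa [hσ] at this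
  have hM2' : MaxRP indep (σ b0) x := by
    have := aux_maxr_map hSIR σ hM2
    rwa [hσ] at this
  set X' : Finset F := X ∪ X.image (g.symm) with hX'def
  have hxX' : x ∉ X' := by
    intro hx'
    rcases Finset.mem_union.mp hx' with h | h
    · exact hxX h
    · obtain ⟨y, hy, hxy⟩ := Finset.mem_image.mp h
      apply hxX
      have : y = g x := by rw [← hxy, g.apply_symm_apply]
      rwa [← hgx, ← this]
  -- realise tp(σ b0 / x) independently from X'
  obtain ⟨vf, ⟨θ, θfix, θmap⟩, hvind⟩ := hSIR.existence ![σ b0] ({x} : Finset F) X'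
  set v0 := vf 0 with hv0def
  have hθx : θ x = x := θfix x (Finset.mem_singleton_self x)
  have hθb : θ (σ b0) = v0 := by simpa using θmap 0
  rw [aux_fset_one] at hvind
  -- hvind : indep {v0} {x} X'
  have hM1v : MaxRP indep x v0 := by
    have := aux_maxr_map hSIR θ hM1'
    rwa [hθx, hθb] at this
  have hM2v : MaxRP indep v0 x := by
    have := aux_maxr_map hSIR θ hM2'
    rwa [hθx, hθb] at this
  have hdepxv : ¬ indep {x} ∅ {v0} := by
    intro hx'
    apply hdep1
    have h1 : θ.symm x = x := by
      apply θ.injective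
      rw [θ.apply_symm_apply, hθx]
    have h2 : θ.symm v0 = σ b0 := by rw [← hθb, θ.symm_apply_apply]
    have := (aux_inv_empty hSIR θ.symm x v0).1 hx'
    rwa [h1, h2] at this
  -- v0 is free over X'
  have hvfree : indep {v0} ∅ X' := aux_afset hSIR hML h1sup hM2v X' hxX' hvind
  -- get a moved realisation of the free type over X'
  obtain ⟨v, ⟨ψ, ψfix, ψmap⟩, hgv⟩ := hfree X' v0 hvfree
  have hψv : ψ v0 = v := by simpa using ψmap 0
  set u := ψ x with hudef
  have hψX : ∀ y ∈ X, ψ y = y := fun y hy => ψfix y (Finset.mem_union_left _ hy)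
  have hMuv : MaxRP indep u v := by
    have := aux_maxr_map hSIR ψ hM1v
    rwa [hψv] at this
  have hMvu : MaxRP indep v u := by
    have := aux_maxr_map hSIR ψ hM2v
    rwa [hψv] at this
  have hdepuv : ¬ indep {u} ∅ {v} := by
    intro hx'
    apply hdepxv
    have h1 : ψ.symm u = x := ψ.symm_apply_apply x
    have h2 : ψ.symm v = v0 := by rw [← hψv, ψ.symm_apply_apply]
    have := (aux_inv_empty hSIR ψ.symm u v).1 hx'
    rwa [h1, h2] at this
  have hvX' : indep {v} ∅ X' := by
    have := (hSIR.invariance ψ {v0} ∅ X').1 hvfree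
    rwa [Finset.image_singleton, hψv, Finset.image_empty, aux_image_fix ψ X' ψfix] at this
  by_cases hgu : g u = u
  case neg => exact ⟨u, aux_sto_single ψ X hψX rfl, hgu⟩
  -- realise tp(u / X ∪ {v}) independently from {g v, u}
  obtain ⟨cf, ⟨χ, χfix, χmap⟩, hcind⟩ :=
    hSIR.existence ![u] (X ∪ ({v} : Finset F)) (({g v} : Finset F) ∪ {u})
  set c1 := cf 0 with hc1def
  have hχu : χ u = c1 := by simpa using χmap 0
  rw [aux_fset_one] at hcind
  -- hcind : indep {c1} (X ∪ {v}) ({g v} ∪ {u})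
  have hχX : ∀ y ∈ X, χ y = y := fun y hy => χfix y (Finset.mem_union_left _ hy)
  have hχv : χ v = v := χfix v (Finset.mem_union_right _ (Finset.mem_singleton_self v))
  have hMcv : MaxRP indep c1 v := by
    have := aux_maxr_map hSIR χ hMuv
    rwa [hχu, hχv] at this
  have hdepcv : ¬ indep {c1} ∅ {v} := by
    intro hx'
    apply hdepuv
    have h1 : χ.symm c1 = u := by rw [← hχu, χ.symm_apply_apply]
    have h2 : χ.symm v = v := by
      apply χ.injective
      rw [χ.apply_symm_apply, hχv]
    have := (aux_inv_empty hSIR χ.symm c1 v).1 hx'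
    rwa [h1, h2] at this
  by_cases hgc : g c1 = c1
  case neg =>
    refine ⟨c1, aux_sto_single (χ.comp ψ) X ?_ ?_, hgc⟩
    · intro y hy
      rw [FirstOrder.Language.Equiv.comp_apply, hψX y hy, hχX y hy]
    · rw [FirstOrder.Language.Equiv.comp_apply, ← hudef, hχu]
  exfalso
  -- g fixes c1, moves v; derive a contradiction
  have hdepc_gv : ¬ indep {c1} ∅ {g v} := by
    intro hx'
    apply hdepcv
    have h0 := (aux_inv_empty hSIR g.symm c1 (g v)).1 hx'
    rw [g.symm_apply_apply] at h0
    have hsc : g.symm c1 = c1 := by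
      apply g.injective
      rw [g.apply_symm_apply, hgc]
    rwa [hsc] at h0
  have hgvX : indep {g v} ∅ X := by
    have h := (hSIR.invariance g {v} ∅ X').1 hvX'
    rw [Finset.image_singleton, Finset.image_empty] at h
    refine aux_mono_r hSIR h ?_
    intro y hy
    rw [Finset.mem_image]
    refine ⟨g.symm y, ?_, g.apply_symm_apply y⟩
    exact Finset.mem_union_right _ (Finset.mem_image_of_mem _ hy)
  have hmono : indep {c1} (X ∪ {v}) {g v} :=
    aux_mono_r hSIR hcind Finset.subset_union_left
  obtain ⟨S, hSsub, hScard, hSind⟩ := h1sup c1 (g v) (X ∪ {v}) hmono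
  by_cases hSe : S = ∅
  · exact hdepc_gv (hSe ▸ hSind)
  · obtain ⟨s, hs⟩ := Finset.card_eq_one.mp
      (le_antisymm hScard (Nat.one_le_iff_ne_zero.mpr
        (fun h => hSe (Finset.card_eq_zero.mp h))))
    subst hs
    have hsmem : s ∈ X ∪ ({v} : Finset F) := Finset.singleton_subset_iff.mp hSsub
    rcases Finset.mem_union.mp hsmem with hsX | hsv
    · -- s ∈ X : g v is free from s, so transitivity frees c1 from g v
      have h1 : indep {g v} {s} {c1} := hSIR.symmetry _ _ _ hSind
      have h2 : indep {g v} ∅ {s} :=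
        aux_mono_r hSIR hgvX (Finset.singleton_subset_iff.mpr hsX)
      have h1' : indep {g v} (({s} : Finset F) ∪ ∅) {c1} := by rwa [Finset.union_empty]
      have h3 : indep {g v} ∅ ({s} ∪ {c1}) := aux_t4 hSIR h2 h1'
      have h4 : indep {g v} ∅ {c1} := aux_mono_r hSIR h3 (by simp)
      exact hdepc_gv (hSIR.symmetry _ _ _ h4)
    · -- s = v : use maximality of the pair (c1, v)
      rw [Finset.mem_singleton] at hsv
      rw [hsv] at hSind
      exact hdepc_gv (aux_afdir hSIR hMcv (g v) hgv hSind)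
end
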